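/- arXiv:1506.04686 — 9 statements merged into one kernel-verified Lean document; each statement's English description precedes it below -/
import Mathlib

section
/- For all integers d and r with d ≥ r ≥ 1, the minimum cardinality of a percolating set for the r-neighbour bootstrap process on the d-dimensional hypercube satisfies m(Q_d, r) ≥ 2^{r-1} + (1/r)·Σ_{j=1}^{r-1} C(d-j-1, r-j)·j·2^{j-1}, where C(a,b) = 0 when a < b. -/
open Finset

/-- One step of the `r`-neighbour bootstrap process on `G`: infected vertices stay infected,
and a vertex with at least `r` infected neighbours becomes infected. -/
def bootstrapStep {V : Type*} (G : SimpleGraph V) (r : ℕ) (A : Set V) : Set V :=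
  A ∪ {v | r ≤ (G.neighborSet v ∩ A).ncard}

/-- `A` percolates under the `r`-neighbour bootstrap process on `G`. -/
def Percolates {V : Type*} (G : SimpleGraph V) (r : ℕ) (A : Set V) : Prop :=
  ∃ n, (bootstrapStep G r)^[n] A = Set.univ

/-- `m(G,r)`: the minimum cardinality of a percolating set. -/
noncomputable def minPerc {V : Type*} (G : SimpleGraph V) (r : ℕ) : ℕ :=
  sInf {n | ∃ A : Set V, Percolates G r A ∧ A.ncard = n}

/-- The `d`-dimensional hypercube `Q_d`. -/
def cube (d : ℕ) : SimpleGraph (Fin d → Bool) where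
  Adj x y := ∃ i, x i ≠ y i ∧ ∀ j, j ≠ i → x j = y j
  symm := ⟨fun x y ⟨i, h1, h2⟩ => ⟨i, h1.symm, fun j hj => (h2 j hj).symm⟩⟩
  loopless := ⟨fun x ⟨i, h1, _⟩ => h1 rfl⟩

/-- The grid `∏ [a i]`. -/
def gridGraph {d : ℕ} (a : Fin d → ℕ) : SimpleGraph (∀ i, Fin (a i)) where
  Adj x y := ∃ i, (((x i : ℕ) + 1 = (y i : ℕ)) ∨ ((y i : ℕ) + 1 = (x i : ℕ))) ∧
    ∀ j, j ≠ i → x j = y j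
  symm := ⟨fun x y ⟨i, h1, h2⟩ => ⟨i, h1.symm, fun j hj => (h2 j hj).symm⟩⟩
  loopless := ⟨fun x ⟨i, h1, _⟩ => by rcases h1 with h | h <;> omega⟩

/-- The star with `n` leaves, `K_{1,n}`; vertex `0` is the centre. -/
def starGraph (n : ℕ) : SimpleGraph (Fin (n + 1)) where
  Adj x y := (x = 0 ∧ y ≠ 0) ∨ (y = 0 ∧ x ≠ 0)
  symm := ⟨fun x y h => h.symm⟩
  loopless := ⟨fun x h => by rcases h with ⟨h1, h2⟩ | ⟨h1, h2⟩ <;> exact h2 h1⟩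

/-- The edge `e` completes a copy of `H` in `G'`. -/
def CompletesCopy {V W : Type*} (H : SimpleGraph W) (G' : SimpleGraph V) (e : Sym2 V) : Prop :=
  ∃ φ : W → V, Function.Injective φ ∧ (∀ a b, H.Adj a b → G'.Adj (φ a) (φ b)) ∧
    ∃ a b, H.Adj a b ∧ e = s(φ a, φ b)

/-- `F` is weakly `(G,H)`-saturated. -/
def WeaklySaturated {V W : Type*} (G : SimpleGraph V) (H : SimpleGraph W)
    (F : SimpleGraph V) : Prop :=
  F ≤ G ∧ ∃ (n : ℕ) (e : Fin n → Sym2 V), Function.Injective e ∧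
    G.edgeSet \ F.edgeSet = Set.range e ∧
    ∀ i : Fin n, CompletesCopy H
      (SimpleGraph.fromEdgeSet (F.edgeSet ∪ e '' {j | j ≤ i})) (e i)

/-- `wsat(G,H)`: the minimum number of edges of a weakly `(G,H)`-saturated graph. -/
noncomputable def wsat {V W : Type*} (G : SimpleGraph V) (H : SimpleGraph W) : ℕ :=
  sInf {m | ∃ F : SimpleGraph V, WeaklySaturated G H F ∧ F.edgeSet.ncard = m}

/-!
Attach to each vertex `u` of `Q_d` a linear map `M u : V → E` out of an `r`-dimensional space
and to each direction `i` a vector `c i ∈ V`, any `r` of which span `V`, such that the edge vector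
`M u (c i)` depends only on the edge `{u, u + eᵢ}`. A vertex with `r` infected neighbours sees
`r` edge vectors that already span `M u (V)`, so along the bootstrap process every edge vector
stays in `∑_{a ∈ A} M a (V)`, a space of dimension at most `r |A|`.

Such representations whose edge vectors span a space of dimension `edgeRankBound d r` are built
by induction: split `Q_{e+1}` into two copies of `Q_e`, represent the lower copy with the
directions `c i` and the upper one with the `c i` taken modulo `c_last`; the two families of edge
vectors are independent of each other, giving Pascal's recursion for `edgeRankBound`. In the base
case `d = r` the `c i` form a basis and all `r 2^(r-1)` edge vectors can be made independent.
-/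

open Module Submodule

def edgeRankBound (d r : ℕ) : ℕ :=
  ∑ j ∈ Icc 1 r, (d - j - 1).choose (r - j) * j * 2 ^ (j - 1)

lemma edgeRankBound_zero_right (d : ℕ) : edgeRankBound d 0 = 0 := by
  simp [edgeRankBound]

lemma edgeRankBound_succ_self (e : ℕ) : edgeRankBound (e + 1) (e + 1) = (e + 1) * 2 ^ e := by
  rw [edgeRankBound, sum_Icc_succ_top (by omega), sum_eq_zero fun j hj => ?_]
  · simp
  · rw [Nat.choose_eq_zero_of_lt (by grind), zero_mul, zero_mul]

lemma edgeRankBound_succ_succ {e r : ℕ} (h : r + 1 ≤ e) :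
    edgeRankBound (e + 1) (r + 1) = edgeRankBound e (r + 1) + edgeRankBound e r := by
  simp only [edgeRankBound]
  rw [sum_Icc_succ_top (by omega), sum_Icc_succ_top (by omega), add_right_comm,
    ← sum_add_distrib]
  congr 1
  · refine sum_congr rfl fun j hj => ?_
    have hj := mem_Icc.1 hj
    rw [show e + 1 - j - 1 = e - j - 1 + 1 by omega, show r + 1 - j = r - j + 1 by omega,
      Nat.choose_succ_succ', add_comm]
    ring
  · simp

lemma edgeRankBound_eq_add_sum {d r : ℕ} (hr : 1 ≤ r) : edgeRankBound d r =
    r * 2 ^ (r - 1) + ∑ j ∈ Icc 1 (r - 1), (d - j - 1).choose (r - j) * j * 2 ^ (j - 1) := by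
  obtain ⟨r, rfl⟩ := Nat.exists_eq_add_of_le' hr
  rw [edgeRankBound, sum_Icc_succ_top (by omega), add_comm]
  simp

universe u v

section

variable {K : Type u} {V : Type v} [Field K] [AddCommGroup V] [Module K V] {ι ι' : Type*}

variable (K) in
def GeneralPosition (c : ι → V) : Prop :=
  ∀ s : Finset ι, s.card ≤ finrank K V → LinearIndepOn K c s

lemma finrank_quotient_span_singleton_add_one [FiniteDimensional K V] {x : V} (hx : x ≠ 0) :
    finrank K (V ⧸ K ∙ x) + 1 = finrank K V := by
  rw [← finrank_span_singleton (K := K) hx, finrank_quotient_add_finrank]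

namespace GeneralPosition

variable {c : ι → V}

lemma comp (hc : GeneralPosition K c) {f : ι' → ι} (hf : Function.Injective f) :
    GeneralPosition K (c ∘ f) := fun s hs => by
  classical
  refine LinearIndepOn.comp_of_image ?_ hf.injOn
  simpa using hc (s.image f) (card_image_le.trans hs)

lemma ne_zero (hc : GeneralPosition K c) (hV : 0 < finrank K V) (i : ι) : c i ≠ 0 := by
  simpa using hc {i} (by rwa [card_singleton])

lemma span_image_eq_top [Finite ι] [FiniteDimensional K V] (hc : GeneralPosition K c)
    {s : Set ι} (hs : finrank K V ≤ s.ncard) : span K (c '' s) = ⊤ := by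
  obtain ⟨t, hts, htcard⟩ := Set.exists_subset_card_eq hs
  lift t to Finset ι using t.toFinite
  rw [Set.ncard_coe_finset] at htcard
  have hspan := (hc t htcard.le).span_eq_top_of_card_eq_finrank' (by simpa using htcard)
  rw [← Set.image_eq_range] at hspan
  exact top_le_iff.1 (hspan ▸ span_mono (Set.image_mono hts))

lemma mkQ [FiniteDimensional K V] (hc : GeneralPosition K c) {a : ι} (ha : c a ≠ 0)
    {f : ι' → ι} (hf : Function.Injective f) (hfa : ∀ i, f i ≠ a) :
    GeneralPosition K fun i => (K ∙ c a).mkQ (c (f i)) := fun s hs => by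
  classical
  have hQ := finrank_quotient_span_singleton_add_one (K := K) ha
  have has : a ∉ f '' s := by simpa using fun i _ => hfa i
  have hins := hc (insert a (s.image f)) (by grind [card_insert_le, card_image_le])
  rw [coe_insert, coe_image, linearIndepOn_insert has] at hins
  refine LinearIndepOn.comp_of_image (v := (K ∙ c a).mkQ ∘ c) ?_ hf.injOn
  refine hins.1.map ?_
  rw [ker_mkQ, ← Set.image_eq_range, disjoint_span_singleton' ha]
  exact hins.2

end GeneralPosition

lemma generalPosition_pow {r : ℕ} {v : ι → K} (hv : Function.Injective v) :
    GeneralPosition K fun i (j : Fin r) => v i ^ (j : ℕ) := fun s hs => by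
  rw [Module.finrank_fin_fun] at hs
  let e : (s : Set ι) ≃ Fin s.card := s.equivFin
  have hdet : (Matrix.vandermonde fun m => v (e.symm m)).det ≠ 0 :=
    Matrix.det_vandermonde_ne_zero_iff.2 (hv.comp (Subtype.val_injective.comp e.symm.injective))
  refine LinearIndepOn.of_comp (LinearMap.funLeft K K (Fin.castLE hs)) ?_
  unfold LinearIndepOn
  convert (Matrix.linearIndependent_rows_of_det_ne_zero hdet).comp e e.injective using 1
  · ext x j
    simp [Matrix.vandermonde]
  · rfl

end

lemma Submodule.finrank_add_finrank_le_of_prod_le {K E₀ E₁ : Type*} [Field K]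
    [AddCommGroup E₀] [Module K E₀] [AddCommGroup E₁] [Module K E₁]
    [FiniteDimensional K E₀] [FiniteDimensional K E₁] {p : Submodule K E₀} {q : Submodule K E₁}
    {S : Submodule K (E₀ × E₁)} (h : p.prod q ≤ S) : finrank K p + finrank K q ≤ finrank K S := by
  rw [prod_le_iff] at h
  have hdisj : Disjoint (p.map (LinearMap.inl K E₀ E₁)) (q.map (LinearMap.inr K E₀ E₁)) :=
    LinearMap.disjoint_inl_inr.mono LinearMap.map_le_range LinearMap.map_le_range
  calc finrank K p + finrank K q
      = finrank K ↥(p.map (LinearMap.inl K E₀ E₁)) +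
          finrank K ↥(q.map (LinearMap.inr K E₀ E₁)) := by
        rw [(p.equivMapOfInjective _ (LinearMap.inl_injective (M₂ := E₁))).finrank_eq,
          (q.equivMapOfInjective _ (LinearMap.inr_injective (M := E₀))).finrank_eq]
    _ = finrank K ↥(p.map (LinearMap.inl K E₀ E₁) ⊔ q.map (LinearMap.inr K E₀ E₁)) := by
        rw [← finrank_sup_add_finrank_inf_eq, hdisj.eq_bot]
        simp
    _ ≤ finrank K S := finrank_mono (sup_le h.1 h.2)

section EdgeRepresentation

variable {K : Type u} {V : Type v} [Field K] [AddCommGroup V] [Module K V]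
  {E : Type*} [AddCommGroup E] [Module K E] {d e : ℕ}

def EdgeCompatible (c : Fin d → V) (M : (Fin d → Bool) → V →ₗ[K] E) : Prop :=
  ∀ u i, M (Function.update u i (!u i)) (c i) = M u (c i)

def edgeSpan (c : Fin d → V) (M : (Fin d → Bool) → V →ₗ[K] E) : Submodule K E :=
  span K (Set.range fun p : (Fin d → Bool) × Fin d => M p.1 (c p.2))

-- The codomain is existential so that representations of two half-cubes glue into a product.
variable (K) in
def HasEdgeRepresentation (c : Fin d → V) (n : ℕ) : Prop :=
  ∃ (E : Type u) (_ : AddCommGroup E) (_ : Module K E) (_ : FiniteDimensional K E)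
    (M : (Fin d → Bool) → V →ₗ[K] E), EdgeCompatible c M ∧ n ≤ finrank K (edgeSpan c M)

lemma hasEdgeRepresentation_zero (c : Fin d → V) : HasEdgeRepresentation K c 0 :=
  ⟨K, _, _, inferInstance, 0, fun _ _ => rfl, Nat.zero_le _⟩

lemma LinearIndependent.hasEdgeRepresentation {c : Fin (e + 1) → V} (hc : LinearIndependent K c)
    (hV : finrank K V = e + 1) : HasEdgeRepresentation K c ((e + 1) * 2 ^ e) := by
  let b := basisOfLinearIndependentOfCardEqFinrank hc (by simp [hV])
  let M (u : Fin (e + 1) → Bool) : V →ₗ[K] (Fin (e + 1) × (Fin e → Bool) → K) :=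
    b.constr K fun i => Pi.single (i, Fin.removeNth i u) 1
  have hM (u i) : M u (c i) = Pi.single (i, Fin.removeNth i u) 1 := by
    simpa [b] using b.constr_basis K _ i
  refine ⟨_, _, _, inferInstance, M, fun u i => by simp [hM], ?_⟩
  have htop : edgeSpan c M = ⊤ := by
    rw [eq_top_iff, ← (Pi.basisFun K _).span_eq, span_le]
    rintro _ ⟨⟨i, w⟩, rfl⟩
    exact subset_span ⟨(Fin.insertNth i false w, i), by simp [hM]⟩
  rw [htop, finrank_top]
  simp

variable {Q E₀ E₁ : Type*} [AddCommGroup Q] [Module K Q] [AddCommGroup E₀] [Module K E₀]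
  [AddCommGroup E₁] [Module K E₁]

def glueHalves (M₀ : (Fin e → Bool) → V →ₗ[K] E₀) (M₁ : (Fin e → Bool) → Q →ₗ[K] E₁)
    (π : V →ₗ[K] Q) (u : Fin (e + 1) → Bool) : V →ₗ[K] E₀ × E₁ :=
  (M₀ (Fin.init u)).prod (if u (Fin.last e) then M₁ (Fin.init u) ∘ₗ π else 0)

variable {M₀ : (Fin e → Bool) → V →ₗ[K] E₀} {M₁ : (Fin e → Bool) → Q →ₗ[K] E₁} {π : V →ₗ[K] Q}
  {c : Fin (e + 1) → V}

lemma glueHalves_snoc (w : Fin e → Bool) (b : Bool) (x : V) :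
    glueHalves M₀ M₁ π (Fin.snoc w b) x = (M₀ w x, if b then M₁ w (π x) else 0) := by
  cases b <;> simp [glueHalves]

lemma edgeCompatible_glueHalves (h₀ : EdgeCompatible (c ∘ Fin.castSucc) M₀)
    (h₁ : EdgeCompatible (π ∘ c ∘ Fin.castSucc) M₁) (hπ : π (c (Fin.last e)) = 0) :
    EdgeCompatible c (glueHalves M₀ M₁ π) := by
  intro u i
  induction i using Fin.lastCases with
  | last => cases h : u (Fin.last e) <;> simp [glueHalves, Fin.init_update_last, h, hπ]
  | cast j =>
    have hlast : Function.update u j.castSucc (!u j.castSucc) (Fin.last e) = u (Fin.last e) :=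
      Function.update_of_ne (Fin.castSucc_lt_last j).ne' _ _
    simp only [glueHalves, LinearMap.prod_apply, Fin.init_update_castSucc, hlast]
    refine Prod.ext (h₀ (Fin.init u) j) ?_
    split_ifs
    · exact h₁ (Fin.init u) j
    · rfl

lemma edgeSpan_prod_le_edgeSpan_glueHalves :
    (edgeSpan (c ∘ Fin.castSucc) M₀).prod (edgeSpan (π ∘ c ∘ Fin.castSucc) M₁) ≤
      edgeSpan c (glueHalves M₀ M₁ π) := by
  unfold edgeSpan
  have hmem (w : Fin e → Bool) (b : Bool) (j : Fin e) :
      glueHalves M₀ M₁ π (Fin.snoc w b) (c j.castSucc) ∈ span K (Set.range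
        fun p : (Fin (e + 1) → Bool) × Fin (e + 1) => glueHalves M₀ M₁ π p.1 (c p.2)) :=
    subset_span ⟨(Fin.snoc w b, j.castSucc), rfl⟩
  rw [prod_le_iff, map_span_le, map_span_le]
  constructor
  · rintro _ ⟨⟨w, j⟩, rfl⟩
    simpa [glueHalves_snoc] using hmem w false j
  · rintro _ ⟨⟨w, j⟩, rfl⟩
    simpa [glueHalves_snoc] using sub_mem (hmem w true j) (hmem w false j)

lemma HasEdgeRepresentation.of_castSucc_of_mkQ {n₀ n₁ : ℕ}
    (h₀ : HasEdgeRepresentation K (c ∘ Fin.castSucc) n₀)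
    (h₁ : HasEdgeRepresentation K (fun i => (K ∙ c (Fin.last e)).mkQ (c i.castSucc)) n₁) :
    HasEdgeRepresentation K c (n₀ + n₁) := by
  obtain ⟨E₀, _, _, _, M₀, hM₀, hn₀⟩ := h₀
  obtain ⟨E₁, _, _, _, M₁, hM₁, hn₁⟩ := h₁
  have hπ : (K ∙ c (Fin.last e)).mkQ (c (Fin.last e)) = 0 := by simp
  exact ⟨E₀ × E₁, _, _, inferInstance, glueHalves M₀ M₁ (K ∙ c (Fin.last e)).mkQ,
    edgeCompatible_glueHalves hM₀ hM₁ hπ, (add_le_add hn₀ hn₁).trans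
      (finrank_add_finrank_le_of_prod_le edgeSpan_prod_le_edgeSpan_glueHalves)⟩

end EdgeRepresentation

theorem Percolates.mem_of_forall_mem {α R E : Type*} [Semiring R] [AddCommMonoid E] [Module R E]
    {G : SimpleGraph α} {r : ℕ} {A : Set α} (hA : Percolates G r A) (x : α → α → E)
    (hsymm : ∀ v w, G.Adj v w → x v w = x w v)
    (hspan : ∀ v (s : Set α), s ⊆ G.neighborSet v → r ≤ s.ncard →
      ∀ w, G.Adj v w → x v w ∈ span R (x v '' s))
    (W : Submodule R E) (hW : ∀ a ∈ A, ∀ w, G.Adj a w → x a w ∈ W)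
    {v w : α} (hvw : G.Adj v w) : x v w ∈ W := by
  suffices h : ∀ n, ∀ v ∈ (bootstrapStep G r)^[n] A, ∀ w, G.Adj v w → x v w ∈ W by
    obtain ⟨n, hn⟩ := hA
    exact h n v (hn ▸ Set.mem_univ v) w hvw
  intro n
  induction n with
  | zero => exact hW
  | succ n ih =>
    intro v hv w hvw
    rw [Function.iterate_succ_apply'] at hv
    rcases hv with hv | hv
    · exact ih v hv w hvw
    · refine span_le.2 ?_ (hspan v _ Set.inter_subset_left hv w hvw)
      rintro _ ⟨u, ⟨hvu, hu⟩, rfl⟩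
      exact hsymm v u hvu ▸ ih u hu v hvu.symm

section Cube

variable {d : ℕ}

lemma cube_adj_iff {u w : Fin d → Bool} :
    (cube d).Adj u w ↔ ∃ i, w = Function.update u i (!u i) := by
  constructor
  · rintro ⟨i, hi, hne⟩
    refine ⟨i, funext fun j => ?_⟩
    rcases eq_or_ne j i with rfl | hj
    · cases hu : u j <;> cases hw : w j <;> simp_all
    · simp [Function.update_of_ne hj, hne j hj]
  · rintro ⟨i, rfl⟩
    exact ⟨i, by simp, fun j hj => (Function.update_of_ne hj _ _).symm⟩

lemma injective_update_not (u : Fin d → Bool) :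
    Function.Injective fun i => Function.update u i (!u i) := by
  intro i j h
  by_contra hij
  simpa [Function.update_of_ne hij] using congrFun h i

lemma cube_neighborSet (u : Fin d → Bool) :
    (cube d).neighborSet u = Set.range fun i => Function.update u i (!u i) := by
  ext w
  simp [cube_adj_iff, eq_comm]

lemma sum_update_not_ne {V : Type*} [AddCommMonoid V] (c : Fin d → V) (u : Fin d → Bool)
    (i : Fin d) : ∑ j with u j ≠ Function.update u i (!u i) j, c j = c i := by
  rw [sum_eq_single_of_mem i (by simp)]
  intro j hj hji
  simp [Function.update_of_ne hji] at hj

variable {K : Type u} {V : Type v} [Field K] [AddCommGroup V] [Module K V]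
  {E : Type*} [AddCommGroup E] [Module K E] {c : Fin d → V} {M : (Fin d → Bool) → V →ₗ[K] E}

-- For adjacent `u`, `w` the sum is `c i` with `i` the direction of the edge.
def cubeEdgeVector (c : Fin d → V) (M : (Fin d → Bool) → V →ₗ[K] E) (u w : Fin d → Bool) : E :=
  M u (∑ i with u i ≠ w i, c i)

lemma cubeEdgeVector_update (u : Fin d → Bool) (i : Fin d) :
    cubeEdgeVector c M u (Function.update u i (!u i)) = M u (c i) := by
  rw [cubeEdgeVector, sum_update_not_ne]

lemma EdgeCompatible.cubeEdgeVector_comm (hM : EdgeCompatible c M) {v w : Fin d → Bool}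
    (hvw : (cube d).Adj v w) : cubeEdgeVector c M v w = cubeEdgeVector c M w v := by
  obtain ⟨i, rfl⟩ := cube_adj_iff.1 hvw
  have hv : Function.update (Function.update v i (!v i)) i
      (!Function.update v i (!v i) i) = v := by simp
  rw [cubeEdgeVector_update, ← hM, ← cubeEdgeVector_update, hv]

lemma GeneralPosition.cubeEdgeVector_mem_span [FiniteDimensional K V] (hc : GeneralPosition K c)
    (M : (Fin d → Bool) → V →ₗ[K] E) {v : Fin d → Bool} {s : Set (Fin d → Bool)}
    (hs : s ⊆ (cube d).neighborSet v) (hr : finrank K V ≤ s.ncard) {w : Fin d → Bool}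
    (hvw : (cube d).Adj v w) : cubeEdgeVector c M v w ∈ span K (cubeEdgeVector c M v '' s) := by
  obtain ⟨i, rfl⟩ := cube_adj_iff.1 hvw
  rw [cube_neighborSet] at hs
  set D := (fun j => Function.update v j (!v j)) ⁻¹' s
  have hsD : s = (fun j => Function.update v j (!v j)) '' D :=
    (Set.image_preimage_eq_of_subset hs).symm
  rw [hsD, Set.ncard_image_of_injective _ (injective_update_not v)] at hr
  rw [hsD, Set.image_image]
  simp only [cubeEdgeVector_update]
  rw [← Set.image_image (M v) c D, ← map_span, hc.span_image_eq_top hr]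
  exact mem_map_of_mem mem_top

theorem finrank_edgeSpan_le_of_percolates [FiniteDimensional K V] [FiniteDimensional K E]
    (hc : GeneralPosition K c) (hM : EdgeCompatible c M) {A : Set (Fin d → Bool)}
    (hA : Percolates (cube d) (finrank K V) A) :
    finrank K (edgeSpan c M) ≤ finrank K V * A.ncard := by
  classical
  let b := Module.finBasis K V
  let W := span K (Set.range fun p : A × Fin (finrank K V) => M p.1 (b p.2))
  have hAW (a) (ha : a ∈ A) (y : V) : M a y ∈ W := by
    rw [← b.sum_repr y, map_sum]
    exact sum_mem fun k _ => by
      rw [map_smul]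
      exact smul_mem _ _ (subset_span ⟨(⟨a, ha⟩, k), rfl⟩)
  have hedge : edgeSpan c M ≤ W := by
    refine span_le.2 ?_
    rintro _ ⟨⟨u, i⟩, rfl⟩
    show M u (c i) ∈ W
    rw [← cubeEdgeVector_update]
    exact hA.mem_of_forall_mem (cubeEdgeVector c M) (fun _ _ => hM.cubeEdgeVector_comm)
      (fun _ _ hs hr _ => hc.cubeEdgeVector_mem_span M hs hr) W (fun a ha _ _ => hAW a ha _)
      (cube_adj_iff.2 ⟨i, rfl⟩)
  calc finrank K (edgeSpan c M) ≤ finrank K W := finrank_mono hedge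
    _ ≤ Fintype.card (A × Fin (finrank K V)) := finrank_range_le_card _
    _ = finrank K V * A.ncard := by simp [Set.ncard_eq_toFinset_card', mul_comm]

end Cube

theorem GeneralPosition.hasEdgeRepresentation {K : Type u} [Field K] (d : ℕ) :
    ∀ {V : Type v} [AddCommGroup V] [Module K V] [FiniteDimensional K V] {c : Fin d → V},
      GeneralPosition K c → finrank K V ≤ d →
        HasEdgeRepresentation K c (edgeRankBound d (finrank K V)) := by
  induction d with
  | zero =>
    intro V _ _ _ c _ hV
    rw [Nat.le_zero.1 hV, edgeRankBound_zero_right]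
    exact hasEdgeRepresentation_zero c
  | succ e ih =>
    intro V _ _ _ c hc hV
    rcases hr : finrank K V with _ | r
    · exact edgeRankBound_zero_right (e + 1) ▸ hasEdgeRepresentation_zero c
    rcases (by omega : r = e ∨ r + 1 ≤ e) with rfl | hre
    · rw [edgeRankBound_succ_self]
      exact LinearIndependent.hasEdgeRepresentation
        (linearIndepOn_univ_iff.1 (by simpa using hc univ (by simp [hr]))) hr
    have ha : c (Fin.last e) ≠ 0 := hc.ne_zero (by omega) _
    have hQ := finrank_quotient_span_singleton_add_one (K := K) ha
    rw [edgeRankBound_succ_succ hre]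
    refine HasEdgeRepresentation.of_castSucc_of_mkQ ?_ ?_
    · simpa [hr] using ih (hc.comp (Fin.castSucc_injective e)) (by omega)
    · simpa [show finrank K (V ⧸ K ∙ c (Fin.last e)) = r by omega] using
        ih (hc.mkQ ha (Fin.castSucc_injective e) fun i => (Fin.castSucc_lt_last i).ne) (by omega)

theorem edgeRankBound_le_mul_ncard {d r : ℕ} (hrd : r ≤ d) {A : Set (Fin d → Bool)}
    (hA : Percolates (cube d) r A) : edgeRankBound d r ≤ r * A.ncard := by
  have hc : GeneralPosition ℝ fun (i : Fin d) (j : Fin r) => ((i : ℕ) : ℝ) ^ (j : ℕ) :=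
    generalPosition_pow (Nat.cast_injective.comp Fin.val_injective)
  obtain ⟨E, _, _, _, M, hM, hn⟩ := hc.hasEdgeRepresentation d (by simpa using hrd)
  rw [finrank_fin_fun] at hn
  simpa using hn.trans (finrank_edgeSpan_le_of_percolates hc hM (by simpa using hA))

/-- For `d ≥ r ≥ 1`,
`m(Q_d, r) ≥ 2^(r-1) + (1/r)·∑_{j=1}^{r-1} C(d-j-1, r-j)·j·2^(j-1)`. -/
theorem stmt0 (d r : ℕ) (hr : 1 ≤ r) (hrd : r ≤ d) :
    (2 : ℝ) ^ (r - 1) +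
      (∑ j ∈ Finset.Icc 1 (r - 1),
        (Nat.choose (d - j - 1) (r - j) : ℝ) * j * 2 ^ (j - 1)) / r
      ≤ (minPerc (cube d) r : ℝ) := by
  obtain ⟨A, hA, hcard⟩ : minPerc (cube d) r ∈ {n | ∃ A, Percolates (cube d) r A ∧ A.ncard = n} :=
    Nat.sInf_mem ⟨_, Set.univ, ⟨0, rfl⟩, rfl⟩
  have hbound := edgeRankBound_le_mul_ncard hrd hA
  rw [edgeRankBound_eq_add_sum hr, hcard] at hbound
  have hr' : (0 : ℝ) < r := by exact_mod_cast hr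
  rw [← mul_le_mul_iff_of_pos_left hr', mul_add, mul_div_cancel₀ _ hr'.ne']
  exact_mod_cast hbound
end

section
/- For every finite graph G and every positive integer r, m(G, r) ≥ wsat(G, S_{r+1})/r; that is, r times the minimum cardinality of a percolating set for the r-neighbour bootstrap process on G is at least the weak saturation number of the star S_{r+1} in G. -/
open Finset

/-! Let `A` percolate and keep, at every vertex of `A`, `min r (deg v)` of its edges; this is at
most `r * |A|` edges. Every other edge `uw` of `G` can be added once its first endpoint `u` is
infected. If `u ∈ A`, the `r` kept edges at `u` together with `uw` form a star `S_{r+1}`. If `u`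
is infected at step `k + 1`, it has `r` neighbours infected by step `k`, none of them `w`, and the
edges to them were added earlier since they have an endpoint infected earlier. Adding the edges in
the order of the infection time of their first endpoint therefore shows that the kept graph is
weakly `(G, S_{r+1})`-saturated. -/

theorem CompletesCopy.mono {V W : Type*} {H : SimpleGraph W} {K K' : SimpleGraph V}
    {e : Sym2 V} (h : CompletesCopy H K e) (hK : K ≤ K') : CompletesCopy H K' e := by
  obtain ⟨φ, hφ, hadj, a, b, hab, rfl⟩ := h
  exact ⟨φ, hφ, fun a b h => hK (hadj a b h), a, b, hab, rfl⟩

theorem completesCopy_starGraph {V : Type*} {K : SimpleGraph V} {u w : V} {X : Set V} {r : ℕ}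
    (huw : K.Adj u w) (hX : X ⊆ K.neighborSet u) (hwX : w ∉ X) (hXfin : X.Finite)
    (hr : r ≤ X.ncard) : CompletesCopy (starGraph (r + 1)) K s(u, w) := by
  obtain ⟨S, hSX, hS⟩ := Set.exists_subset_card_eq hr
  have hSfin : S.Finite := hXfin.subset hSX
  have : Finite (insert w S : Set V) := (hSfin.insert w).to_subtype
  have hcard : Nat.card (insert w S : Set V) = r + 1 := by
    rw [Nat.card_coe_set_eq, Set.ncard_insert_of_notMem (fun h => hwX (hSX h)) hSfin, hS]
  let leaves := Finite.equivFinOfCardEq hcard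
  let leaf : Fin (r + 1) → V := fun j => leaves.symm j
  have hleaf : ∀ j, K.Adj u (leaf j) := fun j => by
    rcases (leaves.symm j).2 with h | h
    · simpa only [leaf, h] using huw
    · exact hX (hSX h)
  refine ⟨Fin.cons u leaf, Fin.cons_injective_iff.2 ⟨?_, ?_⟩, ?_, 0,
    (leaves ⟨w, Set.mem_insert w S⟩).succ, Or.inl ⟨rfl, Fin.succ_ne_zero _⟩,
    by simp [leaf]⟩
  · rintro ⟨j, hj⟩
    exact K.loopless.irrefl u (hj ▸ hleaf j)
  · exact Subtype.val_injective.comp leaves.symm.injective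
  · rintro a b (⟨rfl, hb⟩ | ⟨rfl, ha⟩)
    · obtain ⟨j, rfl⟩ := Fin.exists_succ_eq.2 hb
      simpa using hleaf j
    · obtain ⟨j, rfl⟩ := Fin.exists_succ_eq.2 ha
      simpa using (hleaf j).symm

theorem weaklySaturated_of_rank {V W : Type*} {G F : SimpleGraph V} {H : SimpleGraph W}
    (hFG : F ≤ G) (hfin : (G.edgeSet \ F.edgeSet).Finite) (ρ : Sym2 V → ℕ)
    (h : ∀ e ∈ G.edgeSet \ F.edgeSet, CompletesCopy H
      (SimpleGraph.fromEdgeSet (F.edgeSet ∪ {f ∈ G.edgeSet | ρ f < ρ e} ∪ {e})) e) :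
    WeaklySaturated G H F := by
  let L := hfin.toFinset.toList.mergeSort fun a b => decide (ρ a ≤ ρ b)
  have hperm : L.Perm hfin.toFinset.toList := List.mergeSort_perm _ _
  have hsorted : L.Pairwise fun a b => decide (ρ a ≤ ρ b) :=
    List.pairwise_mergeSort (fun a b c hab hbc => by simp_all; omega)
      (fun a b => by simp; omega) _
  have hmem : ∀ f, f ∈ L ↔ f ∈ G.edgeSet \ F.edgeSet := by simp [hperm.mem_iff]
  refine ⟨hFG, L.length, L.get,
    List.nodup_iff_injective_get.1 (hperm.nodup_iff.2 (Finset.nodup_toList _)), ?_, fun i => ?_⟩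
  · ext f
    simp [← hmem, List.mem_iff_get]
  refine (h _ ((hmem _).1 (List.get_mem _ _))).mono (SimpleGraph.fromEdgeSet_mono ?_)
  rintro f ((hf | ⟨hfG, hlt⟩) | rfl)
  · exact Or.inl hf
  · by_cases hfF : f ∈ F.edgeSet
    · exact Or.inl hfF
    obtain ⟨j, rfl⟩ := List.mem_iff_get.1 ((hmem f).2 ⟨hfG, hfF⟩)
    refine Or.inr ⟨j, show j ≤ i from not_lt.1 fun hij => ?_, rfl⟩
    have := List.pairwise_iff_get.1 hsorted i j hij
    simp only [decide_eq_true_eq] at this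
    omega
  · exact Or.inr ⟨i, show i ≤ i from le_rfl, rfl⟩

section Bootstrap

variable {V : Type*} (G : SimpleGraph V) (r : ℕ) (A : Set V)

noncomputable def edgeInfectionTime (e : Sym2 V) : ℕ :=
  sInf {k | ∃ v ∈ e, v ∈ (bootstrapStep G r)^[k] A}

theorem weaklySaturated_starGraph_of_percolates [Finite V] {F : SimpleGraph V} (hFG : F ≤ G)
    (hF : ∀ v ∈ A, ∀ w, G.Adj v w → ¬F.Adj v w → r ≤ (F.neighborSet v).ncard)
    (hA : Percolates G r A) : WeaklySaturated G (starGraph (r + 1)) F := by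
  refine weaklySaturated_of_rank hFG (Set.toFinite _) (edgeInfectionTime G r A) ?_
  rintro e ⟨heG, heF⟩
  obtain ⟨n, hn⟩ := hA
  obtain ⟨u, hue, hu⟩ : ∃ u ∈ e, u ∈ (bootstrapStep G r)^[edgeInfectionTime G r A e] A :=
    Nat.sInf_mem (s := {k | ∃ v ∈ e, v ∈ (bootstrapStep G r)^[k] A})
      ⟨n, e.out.1, e.out_fst_mem, hn ▸ Set.mem_univ _⟩
  have hearlier : ∀ k < edgeInfectionTime G r A e, ∀ v ∈ e, v ∉ (bootstrapStep G r)^[k] A :=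
    fun k hk v hv hvk => Nat.notMem_of_lt_sInf hk ⟨v, hv, hvk⟩
  obtain ⟨w, rfl⟩ := Sym2.mem_iff_exists.1 hue
  set K := SimpleGraph.fromEdgeSet (F.edgeSet ∪
    {f ∈ G.edgeSet | edgeInfectionTime G r A f < edgeInfectionTime G r A s(u, w)} ∪ {s(u, w)})
  have huw : G.Adj u w := heG
  suffices ∃ X : Set V, X ⊆ K.neighborSet u ∧ w ∉ X ∧ r ≤ X.ncard by
    obtain ⟨X, hXK, hwX, hrX⟩ := this
    exact completesCopy_starGraph (SimpleGraph.fromEdgeSet_adj _ |>.2 ⟨Or.inr rfl, huw.ne⟩)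
      hXK hwX (Set.toFinite X) hrX
  rcases Nat.eq_zero_or_eq_succ_pred (edgeInfectionTime G r A s(u, w)) with h0 | hsucc
  · refine ⟨F.neighborSet u, fun x hx => ⟨Or.inl (Or.inl hx), hx.ne⟩, heF, ?_⟩
    rw [h0] at hu
    exact hF u hu w huw heF
  · set j := (edgeInfectionTime G r A s(u, w)).pred
    refine ⟨G.neighborSet u ∩ (bootstrapStep G r)^[j] A, fun x ⟨hux, hx⟩ => ?_,
      fun hw => hearlier j (by omega) w (Sym2.mem_mk_right u w) hw.2, ?_⟩
    · have hux_time : edgeInfectionTime G r A s(u, x) ≤ j :=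
        Nat.sInf_le ⟨x, Sym2.mem_mk_right u x, hx⟩
      exact ⟨Or.inl (Or.inr ⟨hux, by omega⟩), hux.ne⟩
    · rw [hsucc, Function.iterate_succ_apply'] at hu
      exact hu.resolve_left (hearlier j (by omega) u (Sym2.mem_mk_left u w))

theorem exists_sparse_subgraph [Fintype V] :
    ∃ F ≤ G, F.edgeSet.ncard ≤ r * A.ncard ∧
      ∀ v ∈ A, ∀ w, G.Adj v w → ¬F.Adj v w → r ≤ (F.neighborSet v).ncard := by
  classical
  choose T hTG hT using fun v =>
    Finset.exists_subset_card_eq (min_le_right r (G.neighborFinset v).card)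
  have hTadj : ∀ v, ∀ w ∈ T v, G.Adj v w := fun v w hw =>
    (G.mem_neighborFinset v w).1 (hTG v hw)
  let E : Finset (Sym2 V) := A.toFinset.biUnion fun v => (T v).image (s(v, ·))
  let F := SimpleGraph.fromEdgeSet (E : Set (Sym2 V))
  have hFadj : ∀ v ∈ A, ∀ w ∈ T v, F.Adj v w :=
    fun v hv w hw => (SimpleGraph.fromEdgeSet_adj _).2
      ⟨Finset.mem_biUnion.2 ⟨v, Set.mem_toFinset.2 hv, Finset.mem_image_of_mem _ hw⟩,
        (hTadj v w hw).ne⟩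
  refine ⟨F, fun a b hab => ?_, ?_, fun v hv w hvw hnot => ?_⟩
  · obtain ⟨hab, -⟩ := (SimpleGraph.fromEdgeSet_adj _).1 hab
    obtain ⟨v, -, hv⟩ := Finset.mem_biUnion.1 hab
    obtain ⟨w, hw, hvw⟩ := Finset.mem_image.1 hv
    rcases Sym2.eq_iff.1 hvw with ⟨rfl, rfl⟩ | ⟨rfl, rfl⟩
    exacts [hTadj _ _ hw, (hTadj _ _ hw).symm]
  · calc F.edgeSet.ncard
        ≤ (E : Set (Sym2 V)).ncard := by
          rw [SimpleGraph.edgeSet_fromEdgeSet]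
          exact Set.ncard_le_ncard Set.sdiff_subset
      _ ≤ A.toFinset.card * r := by
          rw [Set.ncard_coe_finset]
          exact Finset.card_biUnion_le_card_mul _ _ _ fun v _ =>
            Finset.card_image_le.trans (hT v ▸ min_le_left _ _)
      _ = r * A.ncard := by rw [Set.ncard_eq_toFinset_card', mul_comm]
  · have hTr : (T v).card = r := by
      refine (hT v).trans (min_eq_left (not_lt.1 fun hdeg => hnot (hFadj v hv w ?_)))
      rw [Finset.eq_of_subset_of_card_le (hTG v) (hT v ▸ (min_eq_right hdeg.le).ge)]
      exact (G.mem_neighborFinset v w).2 hvw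
    calc r = (T v : Set V).ncard := by rw [Set.ncard_coe_finset, hTr]
      _ ≤ _ := Set.ncard_le_ncard (hFadj v hv)

end Bootstrap

theorem wsat_starGraph_le_mul_minPerc {V : Type*} [Fintype V] (G : SimpleGraph V) (r : ℕ) :
    wsat G (starGraph (r + 1)) ≤ r * minPerc G r := by
  obtain ⟨A, hA, hAcard⟩ :
      minPerc G r ∈ {n | ∃ A : Set V, Percolates G r A ∧ A.ncard = n} :=
    Nat.sInf_mem ⟨_, Set.univ, ⟨0, rfl⟩, rfl⟩
  obtain ⟨F, hFG, hFcard, hF⟩ := exists_sparse_subgraph G r A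
  calc wsat G (starGraph (r + 1)) ≤ F.edgeSet.ncard :=
        Nat.sInf_le ⟨F, weaklySaturated_starGraph_of_percolates G r A hFG hF hA, rfl⟩
    _ ≤ r * minPerc G r := hAcard ▸ hFcard

theorem stmt5_general {V : Type*} [Fintype V] (G : SimpleGraph V) (r : ℕ) :
    (wsat G (starGraph (r + 1)) : ℝ) / r ≤ (minPerc G r : ℝ) :=
  div_le_of_le_mul₀ r.cast_nonneg (minPerc G r).cast_nonneg <| by
    exact_mod_cast (wsat_starGraph_le_mul_minPerc G r).trans_eq (mul_comm _ _)

/-- For every finite graph `G` and positive integer `r`,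
`m(G, r) ≥ wsat(G, S_{r+1}) / r`. -/
theorem stmt5 {V : Type*} [Fintype V] (G : SimpleGraph V) (r : ℕ) (hr : 1 ≤ r) :
    (wsat G (starGraph (r + 1)) : ℝ) / r ≤ (minPerc G r : ℝ) :=
  stmt5_general G r
end

section
/- Let G and H be finite graphs and let W be a vector space. Suppose {f_e : e ∈ E(G)} is a collection of vectors in W such that for every subgraph H' of G isomorphic to H there exist nonzero scalars {c_e : e ∈ E(H')} with Σ_{e ∈ E(H')} c_e f_e = 0. Then wsat(G, H) ≥ dim(span{f_e : e ∈ E(G)}). -/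
open Finset

/-! The dependency attached to a copy of `H` has a nonzero coefficient at every edge of the
copy, so an edge that completes a copy has its vector in the span of the vectors of the edges
already present. Along the sequence of additions witnessing that `F` is weakly saturated the
span of `{f e : e ∈ E(F)}` therefore never grows: it is the span over all of `E(G)`, and its
dimension is at most `|E(F)|`. -/

section LinearAlgebra

variable {ι K M : Type*} [Field K] [AddCommGroup M] [Module K M]

theorem Submodule.mem_of_finsum_smul_eq_zero {s : Set ι} (hs : s.Finite) {c : ι → K}
    {f : ι → M} {p : Submodule K M} {x : ι} (hx : x ∈ s) (hcx : c x ≠ 0)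
    (hsum : ∑ᶠ i ∈ s, c i • f i = 0) (hp : ∀ i ∈ s, i ≠ x → f i ∈ p) : f x ∈ p := by
  rw [← Set.insert_eq_of_mem hx, ← Set.insert_sdiff_singleton,
    finsum_mem_insert _ (by simp) hs.sdiff] at hsum
  have hrest : ∑ᶠ i ∈ s \ {x}, c i • f i ∈ p :=
    finsum_mem_induction (· ∈ p) p.zero_mem (fun _ _ ↦ p.add_mem)
      fun i hi ↦ p.smul_mem _ (hp i hi.1 hi.2)
  rw [← p.smul_mem_iff hcx, eq_neg_of_add_eq_zero_left hsum]
  exact p.neg_mem hrest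

theorem finrank_span_image_le_ncard {s : Set ι} (hs : s.Finite) (f : ι → M) :
    Module.finrank K (Submodule.span K (f '' s)) ≤ s.ncard := by
  have := (hs.image f).fintype
  calc Module.finrank K (Submodule.span K (f '' s))
      ≤ (f '' s).toFinset.card := finrank_span_le_card _
    _ = (f '' s).ncard := (Set.ncard_eq_toFinset_card' _).symm
    _ ≤ s.ncard := Set.ncard_image_le hs

end LinearAlgebra

section Graphs

open SimpleGraph

variable {V W : Type*} {G : SimpleGraph V} {H : SimpleGraph W}

theorem weaklySaturated_self : WeaklySaturated G H G :=
  ⟨le_rfl, 0, Fin.elim0, fun i ↦ i.elim0, by simp, fun i ↦ i.elim0⟩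

theorem exists_weaklySaturated_ncard_edgeSet_eq_wsat (G : SimpleGraph V) (H : SimpleGraph W) :
    ∃ F, WeaklySaturated G H F ∧ F.edgeSet.ncard = wsat G H :=
  Nat.sInf_mem (s := {m | ∃ F, WeaklySaturated G H F ∧ F.edgeSet.ncard = m})
    ⟨_, G, weaklySaturated_self, rfl⟩

theorem SimpleGraph.map_mem_edgeSet_of_hom {G' : SimpleGraph V} {φ : W → V}
    (hφ : ∀ a b, H.Adj a b → G'.Adj (φ a) (φ b)) {z : Sym2 W} (hz : z ∈ H.edgeSet) :
    Sym2.map φ z ∈ G'.edgeSet := by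
  induction z using Sym2.ind with
  | _ a b => exact hφ a b hz

def CopiesLinearlyDependent (K : Type*) [Field K] {M : Type*} [AddCommGroup M] [Module K M]
    (G : SimpleGraph V) (H : SimpleGraph W) (f : Sym2 V → M) : Prop :=
  ∀ φ : W → V, Function.Injective φ → (∀ a b, H.Adj a b → G.Adj (φ a) (φ b)) →
    ∃ c : Sym2 V → K, (∀ e ∈ Sym2.map φ '' H.edgeSet, c e ≠ 0) ∧
      ∑ᶠ e ∈ Sym2.map φ '' H.edgeSet, c e • f e = 0

variable [Finite V] {K M : Type*} [Field K] [AddCommGroup M] [Module K M] {f : Sym2 V → M}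

theorem mem_span_of_completesCopy (hcond : CopiesLinearlyDependent K G H f)
    {G' : SimpleGraph V} (hG' : G' ≤ G) {e : Sym2 V} (he : CompletesCopy H G' e) :
    f e ∈ Submodule.span K (f '' (G'.edgeSet \ {e})) := by
  obtain ⟨φ, hφ, hom, a, b, hab, rfl⟩ := he
  obtain ⟨c, hc, hsum⟩ := hcond φ hφ fun a b h ↦ hG' (hom a b h)
  have hab' : s(φ a, φ b) ∈ Sym2.map φ '' H.edgeSet := ⟨s(a, b), hab, rfl⟩
  refine Submodule.mem_of_finsum_smul_eq_zero (Set.toFinite _) hab' (hc _ hab') hsum ?_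
  rintro _ ⟨z, hz, rfl⟩ hne
  exact Submodule.subset_span ⟨_, ⟨map_mem_edgeSet_of_hom hom hz, hne⟩, rfl⟩

theorem WeaklySaturated.span_le (hcond : CopiesLinearlyDependent K G H f)
    {F : SimpleGraph V} (hF : WeaklySaturated G H F) :
    Submodule.span K (f '' G.edgeSet) ≤ Submodule.span K (f '' F.edgeSet) := by
  obtain ⟨hFG, n, e, -, hdiff, hstep⟩ := hF
  have he : ∀ j, e j ∈ G.edgeSet := fun j ↦
    (show e j ∈ G.edgeSet \ F.edgeSet from hdiff ▸ Set.mem_range_self j).1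
  have hadded : ∀ i, f (e i) ∈ Submodule.span K (f '' F.edgeSet) := by
    intro i
    induction i using WellFoundedLT.induction with
    | _ i IH =>
      have hG'G : fromEdgeSet (F.edgeSet ∪ e '' {j | j ≤ i}) ≤ G := by
        rw [fromEdgeSet_le]
        rintro _ ⟨hyF | ⟨j, -, rfl⟩, -⟩
        exacts [edgeSet_mono hFG hyF, he j]
      refine Submodule.span_le.2 ?_ (mem_span_of_completesCopy hcond hG'G (hstep i))
      rintro _ ⟨y, ⟨hy, hyi⟩, rfl⟩
      rw [edgeSet_fromEdgeSet] at hy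
      rcases hy.1 with hyF | ⟨j, hji, rfl⟩
      · exact Submodule.subset_span ⟨y, hyF, rfl⟩
      · exact IH j (lt_of_le_of_ne hji fun hij ↦ hyi (hij ▸ rfl))
  rw [Submodule.span_le]
  rintro _ ⟨y, hy, rfl⟩
  by_cases hyF : y ∈ F.edgeSet
  · exact Submodule.subset_span ⟨y, hyF, rfl⟩
  · obtain ⟨i, rfl⟩ : y ∈ Set.range e := hdiff ▸ ⟨hy, hyF⟩
    exact hadded i

end Graphs

theorem stmt7_general {V W : Type*} [Fintype V]
    (G : SimpleGraph V) (H : SimpleGraph W)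
    {K : Type*} [Field K] {M : Type*} [AddCommGroup M] [Module K M]
    (f : Sym2 V → M)
    (hcond : ∀ φ : W → V, Function.Injective φ →
      (∀ a b, H.Adj a b → G.Adj (φ a) (φ b)) →
      ∃ c : Sym2 V → K, (∀ e ∈ Sym2.map φ '' H.edgeSet, c e ≠ 0) ∧
        ∑ᶠ e ∈ Sym2.map φ '' H.edgeSet, c e • f e = 0) :
    Module.finrank K ↥(Submodule.span K (f '' G.edgeSet)) ≤ wsat G H := by
  obtain ⟨F, hF, hcard⟩ := exists_weaklySaturated_ncard_edgeSet_eq_wsat G H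
  have : FiniteDimensional K (Submodule.span K (f '' F.edgeSet)) :=
    FiniteDimensional.span_of_finite K ((Set.toFinite _).image f)
  calc Module.finrank K (Submodule.span K (f '' G.edgeSet))
      ≤ Module.finrank K (Submodule.span K (f '' F.edgeSet)) :=
        Submodule.finrank_mono (hF.span_le (K := K) (f := f) hcond)
    _ ≤ F.edgeSet.ncard := finrank_span_image_le_ncard (Set.toFinite _) f
    _ = wsat G H := hcard

/-- (Balogh–Bollobás–Morris–Riordan lemma.) If to every copy of `H` in `G`
one can associate nonzero coefficients making the corresponding vectors `f_e` linearly
dependent, then `wsat(G,H) ≥ dim span{f_e : e ∈ E(G)}`. -/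
theorem stmt7 {V W : Type*} [Fintype V] [Fintype W]
    (G : SimpleGraph V) (H : SimpleGraph W)
    {K : Type*} [Field K] {M : Type*} [AddCommGroup M] [Module K M]
    (f : Sym2 V → M)
    (hcond : ∀ φ : W → V, Function.Injective φ →
      (∀ a b, H.Adj a b → G.Adj (φ a) (φ b)) →
      ∃ c : Sym2 V → K, (∀ e ∈ Sym2.map φ '' H.edgeSet, c e ≠ 0) ∧
        ∑ᶠ e ∈ Sym2.map φ '' H.edgeSet, c e • f e = 0) :
    Module.finrank K ↥(Submodule.span K (f '' G.edgeSet)) ≤ wsat G H :=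
  stmt7_general G H f hcond
end

section
/- Let k ≥ ℓ ≥ 0 be integers and let X be a linear subspace of ℝ^k of dimension k − ℓ such that every nonzero x ∈ X satisfies |supp(x)| ≥ ℓ + 1. Then for every subset T ⊆ [k] with |T| = ℓ + 1, there exists a vector x ∈ X with supp(x) = T. -/
/-!
A subspace `X` of dimension `k - ℓ` and the `(ℓ + 1)`-dimensional space of vectors supported
in `T` have dimensions adding up to more than `k`, so they share a nonzero vector `x`. Its
support lies in `T`, and it has at least `ℓ + 1 = |T|` elements, so it is all of `T`.
-/

open Finset

open Module Submodule LinearMap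

theorem Submodule.exists_mem_inf_ne_zero_of_finrank_lt_add {K V : Type*} [DivisionRing K]
    [AddCommGroup V] [Module K V] [FiniteDimensional K V] {s t : Submodule K V}
    (h : finrank K V < finrank K s + finrank K t) : ∃ x ∈ s ⊓ t, x ≠ 0 := by
  by_contra! hst
  have hdisj : Disjoint s t := (disjoint_def).2 fun x hs ht => hst x ⟨hs, ht⟩
  exact (finrank_add_finrank_le_of_disjoint hdisj).not_gt h

section SupportedOn

variable (K : Type*) {ι : Type*} [Field K]

def supportedOn (s : Set ι) : Submodule K (ι → K) :=
  ⨅ i ∈ sᶜ, ker (proj i : (ι → K) →ₗ[K] K)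

variable {K}

theorem mem_supportedOn {s : Set ι} {x : ι → K} :
    x ∈ supportedOn K s ↔ Function.support x ⊆ s := by
  simp only [supportedOn, mem_iInf, mem_ker, proj_apply, Function.support_subset_iff']
  rfl

theorem finrank_supportedOn (s : Finset ι) :
    finrank K (supportedOn K (s : Set ι)) = s.card := by
  classical
  rw [supportedOn, (iInfKerProjEquiv K (fun _ : ι => K) disjoint_compl_right
    (by simp)).finrank_eq]
  simp

end SupportedOn

theorem exists_mem_support_eq_of_finrank_lt {K ι : Type*} [Field K] [Fintype ι]
    {X : Submodule K (ι → K)} {T : Finset ι} (hdim : Fintype.card ι < finrank K X + T.card)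
    (hsupp : ∀ x ∈ X, x ≠ 0 → T.card ≤ (Function.support x).ncard) :
    ∃ x ∈ X, Function.support x = T := by
  obtain ⟨x, ⟨hxX, hxT⟩, hx0⟩ := exists_mem_inf_ne_zero_of_finrank_lt_add (s := X)
    (t := supportedOn K (T : Set ι)) (by simpa [finrank_supportedOn] using hdim)
  refine ⟨x, hxX, Set.eq_of_subset_of_ncard_le (mem_supportedOn.1 hxT) ?_ (Set.toFinite _)⟩
  simpa using hsupp x hxX hx0

theorem stmt9_general (k l : ℕ) (X : Submodule ℝ (Fin k → ℝ))
    (hdim : Module.finrank ℝ ↥X = k - l)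
    (hsupp : ∀ x ∈ X, x ≠ 0 → l + 1 ≤ {i : Fin k | x i ≠ 0}.ncard)
    (T : Finset (Fin k)) (hT : T.card = l + 1) :
    ∃ x ∈ X, {i : Fin k | x i ≠ 0} = ↑T := by
  refine exists_mem_support_eq_of_finrank_lt ?_ (hT ▸ hsupp)
  rw [hdim, hT, Fintype.card_fin]
  omega

/-- If `X ⊆ ℝ^k` has dimension `k - ℓ` and each nonzero `x ∈ X` has support
of size at least `ℓ + 1`, then every `T ⊆ [k]` with `|T| = ℓ + 1` is the support of some
`x ∈ X`. -/
theorem stmt9 (k l : ℕ) (h : l ≤ k) (X : Submodule ℝ (Fin k → ℝ))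
    (hdim : Module.finrank ℝ ↥X = k - l)
    (hsupp : ∀ x ∈ X, x ≠ 0 → l + 1 ≤ {i : Fin k | x i ≠ 0}.ncard)
    (T : Finset (Fin k)) (hT : T.card = l + 1) :
    ∃ x ∈ X, {i : Fin k | x i ≠ 0} = ↑T :=
  stmt9_general k l X hdim hsupp T hT
end

section
/- For all integers d ≥ r ≥ 1, m(Q_d, r) ≤ m(Q_{d-r}, r) + (r−1)·m(Q_{d-r}, r−1) + Σ_{j=1}^{⌈r/2⌉−1} C(r, 2j+1)·m(Q_{d-r}, r−2j). -/
open Finset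

/-!
Split `Q_{n+r} = Q_n □ Q_r` into the layers `Q_n × {S}` with `S = (S₀, T) ∈ {0,1} × {0,1}^{r-1}`,
and let `m` be the weight of `T`. Seed each layer of even weight with a minimal
`(r - m)`-percolating set of `Q_n`. By induction on `m`, even layers first, every layer gets fully
infected. An even layer has `m` full neighbouring layers of tail weight `m - 1`, so inside it the
threshold drops to `r - m`. An odd layer has `m + 1` full neighbouring layers (lower `T` or flip
`S₀`), and its other `r - 1 - m` neighbours are even layers of tail weight `m + 1`, all carrying the
same seed; that seed is thus infected in the odd layer as well, where it percolates at threshold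
`r - 1 - m`. Counting the `C(r-1, m)` even layers of tail weight `m` and pairing `m = 2j, 2j + 1`
by Pascal's rule (`m(Q_n, ·)` is monotone) gives the bound.
-/

section BootstrapStep

variable {V W : Type*} (G : SimpleGraph V) (r : ℕ)

theorem subset_bootstrapStep (A : Set V) : A ⊆ bootstrapStep G r A := Set.subset_union_left

-- `ncard` vanishes on infinite sets, hence the finiteness assumption.
theorem bootstrapStep_mono [Finite V] : Monotone (bootstrapStep G r) := fun _ _ h =>
  Set.union_subset_union h fun _ hv =>
    hv.trans (Set.ncard_le_ncard (Set.inter_subset_inter_right _ h))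

theorem bootstrapStep_le_of_le {t : ℕ} (h : t ≤ r) : bootstrapStep G r ≤ bootstrapStep G t :=
  fun _ => Set.union_subset_union_right _ fun _ hv => h.trans hv

theorem Percolates.of_le [Finite V] {t : ℕ} (h : t ≤ r) {A : Set V} (hA : Percolates G r A) :
    Percolates G t A := by
  obtain ⟨n, hn⟩ := hA
  exact ⟨n, Set.eq_univ_of_univ_subset <|
    hn ▸ (bootstrapStep_mono G r).iterate_le_of_le (bootstrapStep_le_of_le G r h) n A⟩

theorem SimpleGraph.Iso.ncard_preimage {G' : SimpleGraph W} (e : G ≃g G') (X : Set W) :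
    (e ⁻¹' X).ncard = X.ncard :=
  Set.ncard_preimage_of_injective_subset_range e.injective (by simp [e.surjective.range_eq])

theorem SimpleGraph.Iso.preimage_bootstrapStep {G' : SimpleGraph W} (e : G ≃g G') (X : Set W) :
    e ⁻¹' bootstrapStep G' r X = bootstrapStep G r (e ⁻¹' X) := by
  ext v
  have hnbr : G.neighborSet v ∩ e ⁻¹' X = e ⁻¹' (G'.neighborSet (e v) ∩ X) := by
    ext u; simp [e.map_adj_iff]
  simp only [bootstrapStep, Set.preimage_union, Set.mem_union, Set.mem_preimage,
    Set.mem_ofPred_eq, hnbr, e.ncard_preimage]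

theorem Percolates.preimage_iso {G' : SimpleGraph W} (e : G ≃g G') {X : Set W}
    (h : Percolates G' r X) : Percolates G r (e ⁻¹' X) := by
  obtain ⟨n, hn⟩ := h
  refine ⟨n, ?_⟩
  rw [← (Function.Semiconj.iterate_right (e.preimage_bootstrapStep G r) n) X, hn,
    Set.preimage_univ]

theorem minPerc_le_ncard {A : Set V} (h : Percolates G r A) : minPerc G r ≤ A.ncard :=
  Nat.sInf_le ⟨A, h, rfl⟩

theorem exists_percolates_ncard_eq_minPerc :
    ∃ A : Set V, Percolates G r A ∧ A.ncard = minPerc G r :=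
  Nat.sInf_mem (s := {n | ∃ A : Set V, Percolates G r A ∧ A.ncard = n})
    ⟨_, Set.univ, ⟨0, rfl⟩, rfl⟩

theorem minPerc_mono [Finite V] : Monotone (minPerc G) := fun t u h => by
  obtain ⟨A, hA, hcard⟩ := exists_percolates_ncard_eq_minPerc G u
  exact hcard ▸ minPerc_le_ncard G t (hA.of_le G u h)

theorem SimpleGraph.Iso.minPerc_le {G' : SimpleGraph W} (e : G ≃g G') :
    minPerc G r ≤ minPerc G' r := by
  obtain ⟨X, hX, hcard⟩ := exists_percolates_ncard_eq_minPerc G' r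
  calc minPerc G r ≤ (e ⁻¹' X).ncard := minPerc_le_ncard G r (hX.preimage_iso G r e)
    _ = minPerc G' r := by rw [e.ncard_preimage, hcard]

theorem SimpleGraph.Iso.minPerc_eq {G' : SimpleGraph W} (e : G ≃g G') :
    minPerc G r = minPerc G' r :=
  le_antisymm (e.minPerc_le G r) (e.symm.minPerc_le G' r)

end BootstrapStep

section BootstrapClosure

variable {V : Type*} (G : SimpleGraph V) (r : ℕ)

def bootstrapClosure (A : Set V) : Set V := ⋃ k, (bootstrapStep G r)^[k] A

theorem subset_bootstrapClosure (A : Set V) : A ⊆ bootstrapClosure G r A :=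
  Set.subset_iUnion (fun k => (bootstrapStep G r)^[k] A) 0

variable [Finite V]

theorem exists_bootstrapClosure_eq_iterate_fixed (A : Set V) :
    ∃ K, bootstrapClosure G r A = (bootstrapStep G r)^[K] A ∧
      bootstrapStep G r ((bootstrapStep G r)^[K] A) = (bootstrapStep G r)^[K] A := by
  have hmono : Monotone fun k => (bootstrapStep G r)^[k] A := monotone_nat_of_le_succ fun k => by
    rw [Function.iterate_succ_apply']
    exact subset_bootstrapStep G r _
  obtain ⟨K, hK⟩ := WellFoundedGT.monotone_chain_condition ⟨_, hmono⟩
  refine ⟨K, le_antisymm (Set.iUnion_subset fun k => ?_)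
    (Set.subset_iUnion (fun k => (bootstrapStep G r)^[k] A) K), ?_⟩
  · rcases le_total k K with h | h
    exacts [hmono h, (hK k h).ge]
  · rw [← Function.iterate_succ_apply' (bootstrapStep G r)]
    exact (hK (K + 1) K.le_succ).symm

theorem percolates_of_bootstrapClosure_eq_univ {A : Set V}
    (h : bootstrapClosure G r A = Set.univ) : Percolates G r A := by
  obtain ⟨K, hK, -⟩ := exists_bootstrapClosure_eq_iterate_fixed G r A
  exact ⟨K, hK ▸ h⟩

theorem mem_bootstrapClosure_of_le_ncard {A E : Set V} {v : V}
    (hE : E ⊆ G.neighborSet v ∩ bootstrapClosure G r A) (hr : r ≤ E.ncard) :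
    v ∈ bootstrapClosure G r A := by
  obtain ⟨K, hK, hfix⟩ := exists_bootstrapClosure_eq_iterate_fixed G r A
  rw [hK] at hE ⊢
  rw [← hfix]
  exact Or.inr (hr.trans (Set.ncard_le_ncard hE))

end BootstrapClosure

section Cube

open SimpleGraph

theorem cube_adj_iff_hammingDist {d : ℕ} {x y : Fin d → Bool} :
    (cube d).Adj x y ↔ hammingDist x y = 1 := by
  simp only [hammingDist, Finset.card_eq_one, Finset.eq_singleton_iff_unique_mem,
    Finset.mem_filter, Finset.mem_univ, true_and]
  exact exists_congr fun i => and_congr_right fun _ => forall_congr' fun j => not_imp_comm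

theorem hammingDist_append {n r : ℕ} (x x' : Fin n → Bool) (y y' : Fin r → Bool) :
    hammingDist (Fin.append x y) (Fin.append x' y') = hammingDist x x' + hammingDist y y' := by
  simp only [hammingDist, Finset.card_filter, Fin.sum_univ_add, Fin.append_left, Fin.append_right]

def boxProdCubeIso (n r : ℕ) : (cube n □ cube r) ≃g cube (n + r) where
  toEquiv := Fin.appendEquiv n r
  map_rel_iff' {p q} := by
    change (cube (n + r)).Adj (Fin.append p.1 p.2) (Fin.append q.1 q.2) ↔ _
    rw [cube_adj_iff_hammingDist, hammingDist_append,
      boxProd_adj, cube_adj_iff_hammingDist, cube_adj_iff_hammingDist, ← hammingDist_eq_zero,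
      ← hammingDist_eq_zero]
    omega

def flipCoord {ι : Type*} [DecidableEq ι] (v : ι → Bool) (i : ι) : ι → Bool :=
  Function.update v i (!v i)

theorem cube_adj_flipCoord {d : ℕ} (v : Fin d → Bool) (i : Fin d) :
    (cube d).Adj v (flipCoord v i) :=
  ⟨i, by simp [flipCoord], fun j hj => (Function.update_of_ne hj _ _).symm⟩

theorem flipCoord_injective {ι : Type*} [DecidableEq ι] (v : ι → Bool) :
    Function.Injective (flipCoord v) := by
  intro i j h
  by_contra hij
  have := congrFun h i
  simp [flipCoord, Function.update_of_ne hij] at this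

theorem flipCoord_apply_self {ι : Type*} [DecidableEq ι] (v : ι → Bool) (i : ι) :
    flipCoord v i i = !v i :=
  Function.update_self ..

end Cube

section HammingWeight

variable {ι : Type*} [Fintype ι]

def hammingWeight (v : ι → Bool) : ℕ := ∑ i, (v i).toNat

theorem card_filter_eq_hammingWeight (v : ι → Bool) : #{i | v i = true} = hammingWeight v := by
  rw [Finset.card_filter]
  exact Finset.sum_congr rfl fun i _ => by cases v i <;> rfl

theorem hammingWeight_le_card (v : ι → Bool) : hammingWeight v ≤ Fintype.card ι :=
  card_filter_eq_hammingWeight v ▸ Finset.card_filter_le _ _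

theorem hammingWeight_update_add [DecidableEq ι] (v : ι → Bool) (i : ι) (b : Bool) :
    hammingWeight (Function.update v i b) + (v i).toNat = hammingWeight v + b.toNat := by
  unfold hammingWeight
  rw [← add_sum_erase _ _ (mem_univ i), ← add_sum_erase _ _ (mem_univ i), Function.update_self,
    sum_congr rfl fun j hj => by rw [Function.update_of_ne (ne_of_mem_erase hj)]]
  ring

theorem even_hammingWeight_flipCoord [DecidableEq ι] (v : ι → Bool) (i : ι) :
    Even (hammingWeight (flipCoord v i)) ↔ ¬Even (hammingWeight v) := by
  have h : hammingWeight (flipCoord v i) + (v i).toNat = hammingWeight v + (!v i).toNat :=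
    hammingWeight_update_add v i (!v i)
  cases hv : v i <;> simp only [hv, Bool.not_false, Bool.not_true, Bool.toNat_true,
    Bool.toNat_false, add_zero] at h
  · rw [h, Nat.even_add_one]
  · rw [← h, Nat.even_add_one, not_not]

theorem hammingWeight_fin_succ {s : ℕ} (v : Fin (s + 1) → Bool) :
    hammingWeight v = (v 0).toNat + hammingWeight (Fin.tail v) :=
  Fin.sum_univ_succ _

theorem hammingWeight_tail_flipCoord_succ_add {s : ℕ} (v : Fin (s + 1) → Bool) (j : Fin s) :
    hammingWeight (Fin.tail (flipCoord v j.succ)) + (v j.succ).toNat =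
      hammingWeight (Fin.tail v) + (!v j.succ).toNat := by
  rw [flipCoord, Fin.tail_update_succ]
  exact hammingWeight_update_add (Fin.tail v) j _

theorem tail_injOn_even_hammingWeight {s : ℕ} :
    Set.InjOn (Fin.tail (α := fun _ => Bool))
      {v : Fin (s + 1) → Bool | Even (hammingWeight v)} := by
  intro v hv w hw h
  rw [← Fin.cons_self_tail v, ← Fin.cons_self_tail w, h]
  congr 1
  simp only [Set.mem_ofPred_eq, hammingWeight_fin_succ, h] at hv hw
  cases hv0 : v 0 <;> cases hw0 : w 0 <;> simp_all [Nat.even_add, ← Nat.not_even_iff_odd]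

theorem sum_hammingWeight {M : Type*} [AddCommMonoid M] [DecidableEq ι] (f : ℕ → M) :
    ∑ v : ι → Bool, f (hammingWeight v) =
      ∑ m ∈ range (Fintype.card ι + 1), (Fintype.card ι).choose m • f m := by
  rw [← card_univ, ← sum_powerset_apply_card, powerset_univ]
  refine sum_nbij' (fun v => univ.filter fun i => v i = true) (fun X i => decide (i ∈ X))
    (by simp) (by simp) (fun v _ => by ext; simp) (fun X _ => by ext; simp) fun v _ => ?_
  rw [card_filter_eq_hammingWeight]

end HammingWeight

section BoxProd

open SimpleGraph

variable {α β : Type*} [Finite α] [Finite β] {G : SimpleGraph α} {H : SimpleGraph β} {r : ℕ}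
  {A : Set (α × β)}

theorem mk_mem_bootstrapClosure_boxProd {t : ℕ} {b : β} {F : Finset β}
    (hFadj : ∀ b' ∈ F, H.Adj b b') (hF : ∀ b' ∈ F, ∀ a, (a, b') ∈ bootstrapClosure (G □ H) r A)
    (hr : r ≤ t + #F) {B : Set α} (hB : Percolates G t B)
    (hBA : ∀ a ∈ B, (a, b) ∈ bootstrapClosure (G □ H) r A) (a : α) :
    (a, b) ∈ bootstrapClosure (G □ H) r A := by
  obtain ⟨N, hN⟩ := hB
  suffices ∀ k, ∀ a ∈ (bootstrapStep G t)^[k] B, (a, b) ∈ bootstrapClosure (G □ H) r A from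
    this N a (hN ▸ Set.mem_univ a)
  intro k
  induction k with
  | zero => exact hBA
  | succ k ih =>
    intro a ha
    rw [Function.iterate_succ_apply'] at ha
    rcases ha with ha | ha
    · exact ih a ha
    set X := G.neighborSet a ∩ (bootstrapStep G t)^[k] B
    refine mem_bootstrapClosure_of_le_ncard _ _ (E := (·, b) '' X ∪ (a, ·) '' F) ?_ ?_
    · rintro _ (⟨a', ⟨hadj, ha'⟩, rfl⟩ | ⟨b', hb', rfl⟩)
      exacts [⟨boxProd_adj_left.2 hadj, ih a' ha'⟩,
        ⟨boxProd_adj_right.2 (hFadj b' hb'), hF b' hb' a⟩]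
    · have hdisj : Disjoint ((·, b) '' X) ((a, ·) '' (F : Set β)) := by
        rw [Set.disjoint_left]
        rintro _ ⟨a', -, rfl⟩ ⟨b', hb', h⟩
        exact (hFadj b' hb').ne (congrArg Prod.snd h).symm
      rw [Set.ncard_union_eq hdisj, Set.ncard_image_of_injective _ (Prod.mk_left_injective b),
        Set.ncard_image_of_injective _ (Prod.mk_right_injective a), Set.ncard_coe_finset]
      exact hr.trans (Nat.add_le_add_right ha _)

end BoxProd

section CubeLayerSeed

open SimpleGraph

variable {α : Type*}

def cubeLayerSeed (s : ℕ) (B : ℕ → Set α) : Set (α × (Fin (s + 1) → Bool)) :=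
  {p | Even (hammingWeight p.2) ∧ p.1 ∈ B (s + 1 - hammingWeight (Fin.tail p.2))}

theorem ncard_cubeLayerSeed_le (s : ℕ) (B : ℕ → Set α) :
    (cubeLayerSeed s B).ncard ≤ ∑ m ∈ range (s + 1), s.choose m * (B (s + 1 - m)).ncard := by
  classical
  set evens := univ.filter fun S : Fin (s + 1) → Bool => Even (hammingWeight S)
  have hseed : cubeLayerSeed s B =
      ⋃ S ∈ evens, B (s + 1 - hammingWeight (Fin.tail S)) ×ˢ {S} := by
    ext ⟨a, S⟩
    simp [cubeLayerSeed, evens, and_comm]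
  calc (cubeLayerSeed s B).ncard
      ≤ ∑ S ∈ evens, (B (s + 1 - hammingWeight (Fin.tail S)) ×ˢ {S}).ncard :=
        hseed ▸ Finset.set_ncard_biUnion_le _ _
    _ = ∑ T ∈ evens.image Fin.tail, (B (s + 1 - hammingWeight T)).ncard := by
        rw [sum_image fun v hv w hw h =>
          tail_injOn_even_hammingWeight (by simpa [evens] using hv) (by simpa [evens] using hw) h]
        simp [Set.ncard_prod]
    _ ≤ ∑ T : Fin s → Bool, (B (s + 1 - hammingWeight T)).ncard :=
        sum_le_sum_of_subset (subset_univ _)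
    _ = _ := by
        rw [sum_hammingWeight fun m => (B (s + 1 - m)).ncard, Fintype.card_fin]
        simp only [smul_eq_mul]

theorem exists_cube_adj_hammingWeight_tail_lt {s : ℕ} (S : Fin (s + 1) → Bool) :
    ∃ F : Finset (Fin (s + 1) → Bool), #F = hammingWeight (Fin.tail S) ∧ ∀ T ∈ F,
      (cube (s + 1)).Adj S T ∧ hammingWeight (Fin.tail T) < hammingWeight (Fin.tail S) ∧
        T 0 = S 0 := by
  refine ⟨(univ.filter fun j => Fin.tail S j = true).image fun j => flipCoord S j.succ, ?_, ?_⟩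
  · rw [card_image_of_injective _ fun i j h => Fin.succ_injective _ (flipCoord_injective S h),
      card_filter_eq_hammingWeight]
  · simp only [mem_image, mem_filter, mem_univ, true_and]
    rintro _ ⟨j, hj, rfl⟩
    have h := hammingWeight_tail_flipCoord_succ_add S j
    refine ⟨cube_adj_flipCoord S j.succ, ?_, Function.update_of_ne (Fin.succ_ne_zero j).symm _ _⟩
    simp only [Fin.tail] at hj
    simp only [hj, Bool.toNat_true, Bool.not_true, Bool.toNat_false] at h
    omega

variable [Finite α] {G : SimpleGraph α} {s : ℕ} {B : ℕ → Set α}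

theorem mk_mem_bootstrapClosure_cubeLayerSeed_of_even (hB : ∀ t, Percolates G t (B t))
    {S : Fin (s + 1) → Bool} (hS : Even (hammingWeight S))
    (ih : ∀ T, hammingWeight (Fin.tail T) < hammingWeight (Fin.tail S) →
      ∀ a, (a, T) ∈ bootstrapClosure (G □ cube (s + 1)) (s + 1) (cubeLayerSeed s B)) (a : α) :
    (a, S) ∈ bootstrapClosure (G □ cube (s + 1)) (s + 1) (cubeLayerSeed s B) := by
  obtain ⟨F, hFcard, hF⟩ := exists_cube_adj_hammingWeight_tail_lt S
  refine mk_mem_bootstrapClosure_boxProd (t := s + 1 - hammingWeight (Fin.tail S))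
    (fun T hT => (hF T hT).1) (fun T hT => ih T (hF T hT).2.1) ?_ (hB _)
    (fun a ha => subset_bootstrapClosure _ _ _ ⟨hS, ha⟩) a
  have := hammingWeight_le_card (Fin.tail S)
  rw [Fintype.card_fin] at this
  omega

theorem mk_mem_bootstrapClosure_cubeLayerSeed_of_odd (hB : ∀ t, Percolates G t (B t))
    {S : Fin (s + 1) → Bool} (hS : ¬Even (hammingWeight S))
    (ih : ∀ T, hammingWeight (Fin.tail T) < hammingWeight (Fin.tail S) →
      ∀ a, (a, T) ∈ bootstrapClosure (G □ cube (s + 1)) (s + 1) (cubeLayerSeed s B))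
    (heven : ∀ T, hammingWeight (Fin.tail T) = hammingWeight (Fin.tail S) →
      Even (hammingWeight T) →
        ∀ a, (a, T) ∈ bootstrapClosure (G □ cube (s + 1)) (s + 1) (cubeLayerSeed s B)) (a : α) :
    (a, S) ∈ bootstrapClosure (G □ cube (s + 1)) (s + 1) (cubeLayerSeed s B) := by
  obtain ⟨F, hFcard, hF⟩ := exists_cube_adj_hammingWeight_tail_lt S
  have hm := hammingWeight_le_card (Fin.tail S)
  rw [Fintype.card_fin] at hm
  have hhead := heven (flipCoord S 0) (by rw [flipCoord, Fin.tail_update_zero])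
    ((even_hammingWeight_flipCoord S 0).2 hS)
  have hseeded : ∀ a ∈ B (s - hammingWeight (Fin.tail S)),
      (a, S) ∈ bootstrapClosure (G □ cube (s + 1)) (s + 1) (cubeLayerSeed s B) := by
    intro a ha
    refine mem_bootstrapClosure_of_le_ncard _ _ (E := Set.range fun i => (a, flipCoord S i)) ?_ ?_
    · rintro _ ⟨i, rfl⟩
      refine ⟨boxProd_adj_right.2 (cube_adj_flipCoord S i), ?_⟩
      induction i using Fin.cases with
      | zero => exact hhead a
      | succ j =>
        have h := hammingWeight_tail_flipCoord_succ_add S j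
        cases hj : S j.succ <;>
          simp only [hj, Bool.toNat_true, Bool.not_true, Bool.toNat_false, Bool.not_false] at h
        · refine subset_bootstrapClosure _ _ _ ⟨(even_hammingWeight_flipCoord S _).2 hS, ?_⟩
          rwa [show s + 1 - hammingWeight (Fin.tail (flipCoord S j.succ)) =
            s - hammingWeight (Fin.tail S) by omega]
        · exact ih _ (by omega) a
    · rw [Set.ncard_range_of_injective fun i j h => flipCoord_injective S (congrArg Prod.snd h),
        Nat.card_eq_fintype_card, Fintype.card_fin]
  have hnot : flipCoord S 0 ∉ F := fun h => by
    simpa [flipCoord_apply_self] using (hF _ h).2.2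
  refine mk_mem_bootstrapClosure_boxProd (F := insert (flipCoord S 0) F) ?_ ?_ ?_ (hB _) hseeded a
  · simp only [mem_insert, forall_eq_or_imp]
    exact ⟨cube_adj_flipCoord S 0, fun T hT => (hF T hT).1⟩
  · simp only [mem_insert, forall_eq_or_imp]
    exact ⟨hhead, fun T hT => ih T (hF T hT).2.1⟩
  · rw [card_insert_of_notMem hnot, hFcard]
    omega

theorem percolates_cubeLayerSeed (hB : ∀ t, Percolates G t (B t)) :
    Percolates (G □ cube (s + 1)) (s + 1) (cubeLayerSeed s B) := by
  refine percolates_of_bootstrapClosure_eq_univ _ _ (Set.eq_univ_of_forall fun ⟨a, S⟩ => ?_)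
  suffices ∀ m, ∀ S : Fin (s + 1) → Bool, hammingWeight (Fin.tail S) = m →
      ∀ a, (a, S) ∈ bootstrapClosure (G □ cube (s + 1)) (s + 1) (cubeLayerSeed s B) from
    this _ S rfl a
  intro m
  induction m using Nat.strong_induction_on with
  | _ m ih =>
    rintro S rfl
    have ih' := fun T (hT : hammingWeight (Fin.tail T) < hammingWeight (Fin.tail S)) =>
      ih _ hT T rfl
    have heven := fun T (hT : hammingWeight (Fin.tail T) = hammingWeight (Fin.tail S))
      (hTe : Even (hammingWeight T)) =>
        mk_mem_bootstrapClosure_cubeLayerSeed_of_even hB hTe (hT ▸ ih')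
    by_cases hS : Even (hammingWeight S)
    exacts [heven S rfl hS, mk_mem_bootstrapClosure_cubeLayerSeed_of_odd hB hS ih' heven]

theorem minPerc_boxProd_cube_le (G : SimpleGraph α) (s : ℕ) :
    minPerc (G □ cube (s + 1)) (s + 1) ≤
      ∑ m ∈ range (s + 1), s.choose m * minPerc G (s + 1 - m) := by
  choose B hB hcard using exists_percolates_ncard_eq_minPerc G
  calc _ ≤ (cubeLayerSeed s B).ncard := minPerc_le_ncard _ _ (percolates_cubeLayerSeed hB)
    _ ≤ _ := ncard_cubeLayerSeed_le s B
    _ = _ := by simp only [hcard]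

end CubeLayerSeed

theorem sum_range_choose_mul_le_of_antitone {g : ℕ → ℕ} (hg : Antitone g) (s K : ℕ) :
    ∑ m ∈ range (2 * K + 2), s.choose m * g m ≤
      g 0 + s * g 1 + ∑ j ∈ Icc 1 K, (s + 1).choose (2 * j + 1) * g (2 * j) := by
  induction K with
  | zero => simp [sum_range_succ]
  | succ K ih =>
    have hpair : s.choose (2 * K + 2) * g (2 * K + 2) + s.choose (2 * K + 3) * g (2 * K + 3) ≤
        (s + 1).choose (2 * (K + 1) + 1) * g (2 * (K + 1)) := by
      rw [show 2 * (K + 1) + 1 = 2 * K + 2 + 1 by ring, Nat.choose_succ_succ', add_mul,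
        show 2 * (K + 1) = 2 * K + 2 by ring]
      exact Nat.add_le_add_left (Nat.mul_le_mul_left _ (hg (by omega))) _
    rw [show 2 * (K + 1) + 2 = 2 * K + 2 + 1 + 1 by ring, sum_range_succ, sum_range_succ,
      sum_Icc_succ_top (by omega)]
    omega

theorem sum_range_choose_mul_le {f : ℕ → ℕ} (hf : Monotone f) (s : ℕ) :
    ∑ m ∈ range (s + 1), s.choose m * f (s + 1 - m) ≤
      f (s + 1) + s * f s +
        ∑ j ∈ Icc 1 ((s + 2) / 2 - 1), (s + 1).choose (2 * j + 1) * f (s + 1 - 2 * j) :=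
  calc _ ≤ ∑ m ∈ range (2 * ((s + 2) / 2 - 1) + 2), s.choose m * f (s + 1 - m) :=
        sum_le_sum_of_subset (range_subset_range.2 (by omega))
    _ ≤ _ := sum_range_choose_mul_le_of_antitone (g := fun m => f (s + 1 - m))
        (fun a b h => hf (by omega)) s _

/-- Recursive upper bound:
`m(Q_d,r) ≤ m(Q_{d-r},r) + (r-1)·m(Q_{d-r},r-1) + ∑_{j=1}^{⌈r/2⌉-1} C(r,2j+1)·m(Q_{d-r},r-2j)`. -/
theorem stmt12 (d r : ℕ) (hr : 1 ≤ r) (hrd : r ≤ d) :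
    minPerc (cube d) r ≤
      minPerc (cube (d - r)) r + (r - 1) * minPerc (cube (d - r)) (r - 1) +
        ∑ j ∈ Finset.Icc 1 ((r + 1) / 2 - 1),
          Nat.choose r (2 * j + 1) * minPerc (cube (d - r)) (r - 2 * j) := by
  obtain ⟨s, rfl⟩ : ∃ s, r = s + 1 := ⟨r - 1, by omega⟩
  obtain ⟨n, rfl⟩ : ∃ n, d = n + (s + 1) := ⟨d - (s + 1), by omega⟩
  rw [Nat.add_sub_cancel, Nat.add_sub_cancel, ← (boxProdCubeIso n (s + 1)).minPerc_eq]
  exact (minPerc_boxProd_cube_le (cube n) s).trans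
    (sum_range_choose_mul_le (minPerc_mono (cube n)) s)
end

section
/- For all integers n ≥ 2 and d ≥ 1, the minimum cardinality of a percolating set for the d-neighbour bootstrap process on the d-dimensional grid [n]^d satisfies m([n]^d, d) ≥ n^{d-1}. -/
open Finset

/-!
Along the `r`-neighbour bootstrap process the potential `2r|A| - 2e(A)`, where `e(A)` is the
number of edges inside `A`, never increases: a newly infected vertex raises `2r|A|` by `2r` but
brings at least `r` edges into `A`. A percolating set therefore satisfies
`2r|V| - 2e(G) ≤ 2r|A|`, i.e. `r|V| ≤ r|A| + e(G)`. The grid `[n]^d` has `n^d` vertices and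
`d(n-1)n^(d-1)` edges, so for `r = d` this reads `|A| ≥ n^d - (n-1)n^(d-1) = n^(d-1)`.
-/

namespace SimpleGraph

variable {V : Type*} (G : SimpleGraph V) [DecidableRel G.Adj]

lemma card_interedges_eq_sum (s t : Finset V) :
    #(G.interedges s t) = ∑ v ∈ s, #{u ∈ t | G.Adj v u} := by
  simp only [interedges_def, card_filter, sum_product]

lemma card_interedges_univ [Fintype V] : #(G.interedges univ univ) = 2 * #G.edgeFinset := by
  simp only [card_interedges_eq_sum, ← sum_degrees_eq_twice_card_edges,
    ← card_neighborFinset_eq_degree, neighborFinset_eq_filter]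

variable [DecidableEq V]

lemma card_interedges_union_left {s₁ s₂ : Finset V} (h : Disjoint s₁ s₂) (t : Finset V) :
    #(G.interedges (s₁ ∪ s₂) t) = #(G.interedges s₁ t) + #(G.interedges s₂ t) := by
  rw [← card_union_of_disjoint (G.interedges_disjoint_left h t), interedges_def, interedges_def,
    interedges_def, union_product, filter_union]

lemma card_interedges_union_right (s : Finset V) {t₁ t₂ : Finset V} (h : Disjoint t₁ t₂) :
    #(G.interedges s (t₁ ∪ t₂)) = #(G.interedges s t₁) + #(G.interedges s t₂) := by
  rw [← card_union_of_disjoint (G.interedges_disjoint_right s h), interedges_def, interedges_def,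
    interedges_def, product_union, filter_union]

end SimpleGraph

open SimpleGraph

section Bootstrap

variable {V : Type*} [Fintype V] [DecidableEq V] (G : SimpleGraph V) [DecidableRel G.Adj] (r : ℕ)

def bootstrapStepFinset (A : Finset V) : Finset V :=
  A ∪ ({v | r ≤ #{u ∈ A | G.Adj v u}} : Finset V)

lemma coe_bootstrapStepFinset (A : Finset V) :
    (bootstrapStepFinset G r A : Set V) = bootstrapStep G r A := by
  ext v
  have hcount : (G.neighborSet v ∩ A).ncard = #{u ∈ A | G.Adj v u} := by
    rw [← Set.ncard_coe_finset, coe_filter]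
    congr 1
    ext u
    simp [and_comm]
  simp [bootstrapStepFinset, bootstrapStep, hcount]

lemma coe_iterate_bootstrapStepFinset (k : ℕ) (A : Finset V) :
    ((bootstrapStepFinset G r)^[k] A : Set V) = (bootstrapStep G r)^[k] A :=
  (Function.Semiconj.iterate_right (f := ((↑) : Finset V → Set V))
    (fun A ↦ coe_bootstrapStepFinset G r A) k) A

-- `G.interedges A A` consists of ordered pairs, so it counts every edge inside `A` twice.
def bootstrapPotential (A : Finset V) : ℤ :=
  2 * r * #A - #(G.interedges A A)

lemma mul_card_le_card_interedges_bootstrapStepFinset_sdiff (A : Finset V) :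
    r * #(bootstrapStepFinset G r A \ A) ≤ #(G.interedges (bootstrapStepFinset G r A \ A) A) := by
  rw [card_interedges_eq_sum, mul_comm, ← smul_eq_mul, ← sum_const]
  refine sum_le_sum fun v hv ↦ ?_
  simp only [bootstrapStepFinset, mem_sdiff, mem_union, mem_filter, mem_univ, true_and] at hv
  exact hv.1.resolve_left hv.2

lemma bootstrapPotential_bootstrapStepFinset_le (A : Finset V) :
    bootstrapPotential G r (bootstrapStepFinset G r A) ≤ bootstrapPotential G r A := by
  set S := bootstrapStepFinset G r A \ A
  have hsplit : bootstrapStepFinset G r A = A ∪ S := (union_sdiff_of_subset subset_union_left).symm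
  have hdisj : Disjoint A S := disjoint_sdiff
  have hedges : #(G.interedges (A ∪ S) (A ∪ S)) =
      #(G.interedges A A) + #(G.interedges A S) + #(G.interedges S A) + #(G.interedges S S) := by
    rw [G.card_interedges_union_left hdisj, G.card_interedges_union_right _ hdisj,
      G.card_interedges_union_right _ hdisj]
    ring
  have hsymm : #(G.interedges A S) = #(G.interedges S A) :=
    have : Std.Symm G.Adj := ⟨fun _ _ h ↦ h.symm⟩
    Rel.card_interedges_comm _ _
  have hnew := mul_card_le_card_interedges_bootstrapStepFinset_sdiff G r A
  unfold bootstrapPotential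
  rw [hsplit, hedges, card_union_of_disjoint hdisj]
  push_cast
  linarith

lemma bootstrapPotential_iterate_le (k : ℕ) (A : Finset V) :
    bootstrapPotential G r ((bootstrapStepFinset G r)^[k] A) ≤ bootstrapPotential G r A := by
  induction k with
  | zero => rfl
  | succ k ih =>
    rw [Function.iterate_succ_apply']
    exact (bootstrapPotential_bootstrapStepFinset_le G r _).trans ih

theorem Percolates.mul_card_le_mul_ncard_add_card_edgeFinset {A : Set V}
    (hA : Percolates G r A) :
    r * Fintype.card V ≤ r * A.ncard + #G.edgeFinset := by
  classical
  obtain ⟨k, hk⟩ := hA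
  rw [← A.coe_toFinset, ← coe_iterate_bootstrapStepFinset, coe_eq_univ] at hk
  have h := bootstrapPotential_iterate_le G r k A.toFinset
  rw [hk, bootstrapPotential, bootstrapPotential, card_univ, card_interedges_univ] at h
  rw [Set.ncard_eq_toFinset_card']
  push_cast at h
  have : (0 : ℤ) ≤ #(G.interedges A.toFinset A.toFinset) := Nat.cast_nonneg _
  zify
  linarith

theorem mul_card_le_mul_minPerc_add_card_edgeFinset :
    r * Fintype.card V ≤ r * minPerc G r + #G.edgeFinset := by
  obtain ⟨A, hA, hcard⟩ : minPerc G r ∈ {m | ∃ A : Set V, Percolates G r A ∧ A.ncard = m} :=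
    Nat.sInf_mem ⟨_, Set.univ, ⟨0, rfl⟩, rfl⟩
  exact hcard ▸ hA.mul_card_le_mul_ncard_add_card_edgeFinset

end Bootstrap

lemma card_filter_pi_apply {ι α : Type*} [Fintype ι] [DecidableEq ι] [Fintype α] [DecidableEq α]
    (p : α → Prop) [DecidablePred p] (i : ι) :
    #{x : ι → α | p (x i)} = #{a | p a} * Fintype.card α ^ (Fintype.card ι - 1) := by
  have hmaps : Set.MapsTo (fun x : ι → α ↦ x i) ↑({x | p (x i)} : Finset (ι → α))
      ↑({a | p a} : Finset α) := fun x hx ↦ by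
    simpa using hx
  rw [card_eq_sum_card_fiberwise hmaps, ← smul_eq_mul, ← sum_const]
  refine sum_congr rfl fun a ha ↦ ?_
  have hfiber : ({x ∈ {x : ι → α | p (x i)} | x i = a} : Finset _) =
      {x ∈ Fintype.piFinset fun _ : ι ↦ (univ : Finset α) | x i = a} := by
    ext x
    simp only [mem_filter, mem_univ, true_and, Fintype.piFinset_univ] at ha ⊢
    exact ⟨And.right, fun hx ↦ ⟨hx ▸ ha, hx⟩⟩
  rw [hfiber, Fintype.card_filter_piFinset_const_eq_of_mem _ _ (mem_univ a), card_univ]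

section Grid

variable {d : ℕ}

instance (a : Fin d → ℕ) : DecidableRel (gridGraph a).Adj := fun x y ↦
  decidable_of_iff (∃ i, ((x i : ℕ) + 1 = y i ∨ (y i : ℕ) + 1 = x i) ∧ ∀ j, j ≠ i → x j = y j)
    Iff.rfl

def gridStepsUp (n : ℕ) (i : Fin d) : Finset ((Fin d → Fin n) × (Fin d → Fin n)) :=
  {p | (p.1 i : ℕ) + 1 = p.2 i ∧ ∀ j, j ≠ i → p.1 j = p.2 j}

lemma card_gridStepsUp (n : ℕ) (i : Fin d) : #(gridStepsUp n i) = (n - 1) * n ^ (d - 1) := by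
  have hbij : #(gridStepsUp n i) = #{x : Fin d → Fin n | (x i : ℕ) < n - 1} := by
    refine card_bij' (fun p _ ↦ p.1) (fun x hx ↦ (x, Function.update x i ⟨x i + 1, by
      simp only [mem_filter, mem_univ, true_and] at hx; omega⟩)) ?_ ?_ ?_ ?_
    · intro p hp
      simp only [gridStepsUp, mem_filter, mem_univ, true_and] at hp ⊢
      omega
    · intro x hx
      simp only [gridStepsUp, mem_filter, mem_univ, true_and, Function.update_self]
      exact fun j hj ↦ (Function.update_of_ne hj _ _).symm
    · intro p hp
      simp only [gridStepsUp, mem_filter, mem_univ, true_and] at hp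
      refine Prod.ext rfl (funext fun j ↦ ?_)
      obtain rfl | hj := eq_or_ne j i
      · exact (Function.update_self _ _ _).trans (Fin.ext hp.1)
      · exact (Function.update_of_ne hj _ _).trans (hp.2 j hj)
    · intro x _
      rfl
  rw [hbij, card_filter_pi_apply (fun a : Fin n ↦ (a : ℕ) < n - 1), Fin.card_filter_val_lt,
    Fintype.card_fin, Fintype.card_fin]
  congr 1
  omega

lemma interedges_gridGraph_univ (n : ℕ) :
    (gridGraph fun _ : Fin d ↦ n).interedges univ univ =
      univ.biUnion fun i ↦
        gridStepsUp n i ∪ (gridStepsUp n i).map (Equiv.prodComm _ _).toEmbedding := by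
  ext ⟨x, y⟩
  simp [mem_interedges_iff, gridGraph, gridStepsUp, or_and_right, eq_comm]

lemma card_edgeFinset_gridGraph (n : ℕ) :
    #(gridGraph fun _ : Fin d ↦ n).edgeFinset = d * ((n - 1) * n ^ (d - 1)) := by
  have h := (gridGraph fun _ : Fin d ↦ n).card_interedges_univ
  rw [interedges_gridGraph_univ, card_biUnion] at h
  · have hdisj (i : Fin d) :
        Disjoint (gridStepsUp n i) ((gridStepsUp n i).map (Equiv.prodComm _ _).toEmbedding) := by
      rw [Finset.disjoint_left]
      rintro ⟨x, y⟩ hp hq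
      simp only [gridStepsUp, mem_filter, mem_univ, true_and, mem_map_equiv,
        Equiv.prodComm_symm, Equiv.prodComm_apply, Prod.swap_prod_mk] at hp hq
      omega
    simp only [card_union_of_disjoint (hdisj _), card_map, card_gridStepsUp, sum_const, card_univ,
      Fintype.card_fin, smul_eq_mul] at h
    linarith
  · intro i _ i' _ hii'
    rw [Function.onFun, Finset.disjoint_left]
    rintro ⟨x, y⟩ hp hq
    simp only [gridStepsUp, ne_eq, mem_union, mem_filter, mem_univ, true_and, mem_map_equiv,
      Equiv.prodComm_symm, Equiv.prodComm_apply, Prod.swap_prod_mk] at hp hq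
    have hagree : (x i' : ℕ) = y i' := by
      rcases hp with ⟨-, hp⟩ | ⟨-, hp⟩ <;> rw [hp i' hii'.symm]
    omega

end Grid

/-- `m([n]^d, d) ≥ n^(d-1)` for `n ≥ 2`, `d ≥ 1`. -/
theorem stmt13 (n d : ℕ) (hn : 2 ≤ n) (hd : 1 ≤ d) :
    n ^ (d - 1) ≤ minPerc (gridGraph (fun _ : Fin d => n)) d := by
  have h := mul_card_le_mul_minPerc_add_card_edgeFinset (gridGraph fun _ : Fin d ↦ n) d
  rw [card_edgeFinset_gridGraph, ← mul_add] at h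
  have hcard : Fintype.card (Fin d → Fin n) = (n - 1) * n ^ (d - 1) + n ^ (d - 1) := by
    rw [← add_one_mul, Nat.sub_add_cancel (by omega), ← pow_succ', Nat.sub_add_cancel hd,
      Fintype.card_fun, Fintype.card_fin, Fintype.card_fin]
  have h' := Nat.le_of_mul_le_mul_left h (by omega)
  rw [hcard] at h'
  omega
end

section
/- Let k ≥ ℓ ≥ 1 be integers and for 1 ≤ i ≤ k − ℓ define α_i ∈ ℝ^ℓ by α_{i,j} := i^j for 1 ≤ j ≤ ℓ. Then for every nonempty subset T ⊆ [ℓ], the vectors π_T(α_1), …, π_T(α_{k-ℓ}) are in general position in ℝ^{|T|}: every collection of at most |T| of these vectors (with distinct indices i) is linearly independent. -/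
/-!
A vanishing linear combination `∑ₛ dₛ • (xᵢ ^ eₛ)ᵢ` of the columns of a generalized
Vandermonde matrix is a polynomial `∑ₛ dₛ X ^ eₛ` with at most `|κ|` nonzero coefficients
vanishing at the `|ι| ≥ |κ|` distinct positive nodes `xᵢ`. By Descartes' rule of signs such a
polynomial has fewer positive roots than terms, so it is zero and the columns are independent.
For the rows, pick `|ι|` of the exponents: the resulting square submatrix has independent
columns, hence is invertible, hence has independent rows, and these are restrictions of the rows
of the full matrix.
-/

open Polynomial Finset

namespace Polynomial

theorem signVariations_lt_card_support {R : Type*} [Semiring R] [LinearOrder R] {P : R[X]}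
    (hP : P ≠ 0) : signVariations P < #P.support := by
  by_cases hE : P.eraseLead = 0
  · have hP_monomial := eraseLead_add_monomial_natDegree_leadingCoeff P
    rw [hE, zero_add] at hP_monomial
    have hzero : signVariations P = 0 := by rw [← hP_monomial, signVariations_monomial]
    rw [hzero]
    exact card_pos.mpr (support_nonempty.mpr hP)
  · calc signVariations P ≤ signVariations P.eraseLead + 1 := signVariations_le_eraseLead_succ P
      _ < #P.eraseLead.support + 1 := by gcongr; exact signVariations_lt_card_support hE
      _ = #P.support := card_support_eraseLead_add_one hP
termination_by #P.support
decreasing_by exact eraseLead_support_card_lt hP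

theorem coeff_sum_monomial {R κ : Type*} [Semiring R] [Fintype κ] (e : κ → ℕ) (d : κ → R)
    (m : ℕ) : (∑ s, monomial (e s) (d s)).coeff m = ∑ s, if e s = m then d s else 0 := by
  simp only [finsetSum_coeff, coeff_monomial]

theorem eq_zero_of_card_support_le_of_pos_roots {R : Type*} [CommRing R] [LinearOrder R]
    [IsStrictOrderedRing R] {P : R[X]} (S : Finset R)
    (hpos : ∀ x ∈ S, 0 < x) (hroot : ∀ x ∈ S, P.IsRoot x) (hcard : #P.support ≤ #S) :
    P = 0 := by
  by_contra hP
  have hS_le_roots : S.val ≤ P.roots :=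
    (Multiset.le_iff_subset S.nodup).mpr fun x hx => (mem_roots hP).mpr (hroot x hx)
  have hS_card : #S ≤ P.roots.countP (0 < ·) :=
    calc #S = S.val.countP (0 < ·) := (Multiset.countP_eq_card.mpr hpos).symm
      _ ≤ P.roots.countP (0 < ·) := Multiset.countP_le_of_le _ hS_le_roots
  have := (roots_countP_pos_le_signVariations P).trans_lt (signVariations_lt_card_support hP)
  omega

end Polynomial

theorem linearIndependent_pow_exponents_of_card_le {K ι κ : Type*} [Field K] [LinearOrder K]
    [IsStrictOrderedRing K] [Fintype ι] [Fintype κ] {x : ι → K} (hx : Function.Injective x)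
    (hpos : ∀ i, 0 < x i) {e : κ → ℕ} (he : Function.Injective e)
    (hcard : Fintype.card κ ≤ Fintype.card ι) :
    LinearIndependent K (fun s i => x i ^ e s) := by
  classical
  rw [Fintype.linearIndependent_iff]
  intro d hd s
  set P : K[X] := ∑ s, monomial (e s) (d s)
  have hroot : ∀ i, P.IsRoot (x i) := fun i => by
    simpa [P, eval_finsetSum, mul_comm] using congrFun hd i
  have hsupport : P.support ⊆ univ.image e := fun m hm => by
    by_contra hm'
    refine mem_support_iff.mp hm ?_
    rw [coeff_sum_monomial]
    exact sum_eq_zero fun t _ => if_neg fun h => hm' (mem_image.mpr ⟨t, mem_univ t, h⟩)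
  have hP : P = 0 := by
    refine eq_zero_of_card_support_le_of_pos_roots (univ.image x) (by simpa using hpos)
      (by simpa using hroot) ?_
    calc #P.support ≤ #(univ.image e) := card_le_card hsupport
      _ ≤ Fintype.card κ := card_image_le
      _ ≤ Fintype.card ι := hcard
      _ = #(univ.image x) := (card_image_of_injective _ hx).symm
  have hcoeff : P.coeff (e s) = _ := coeff_sum_monomial e d (e s)
  simp only [hP, coeff_zero, he.eq_iff, sum_ite_eq', mem_univ, if_true] at hcoeff
  exact hcoeff.symm

theorem Matrix.linearIndependent_rows_of_linearIndependent_submatrix_cols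
    {K m n : Type*} [Field K] [Fintype m] [DecidableEq m] (M : Matrix m n K) (g : m → n)
    (h : LinearIndependent K (M.submatrix id g).col) : LinearIndependent K M.row := by
  have hrows : LinearIndependent K (M.submatrix id g).row :=
    linearIndependent_rows_iff_isUnit.mpr (linearIndependent_cols_iff_isUnit.mp h)
  exact hrows.of_comp (LinearMap.funLeft K K g)

theorem linearIndependent_pow_nodes_of_card_le {K ι κ : Type*} [Field K] [LinearOrder K]
    [IsStrictOrderedRing K] [Fintype ι] [Fintype κ] {x : ι → K} (hx : Function.Injective x)
    (hpos : ∀ i, 0 < x i) {e : κ → ℕ} (he : Function.Injective e)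
    (hcard : Fintype.card ι ≤ Fintype.card κ) :
    LinearIndependent K (fun i s => x i ^ e s) := by
  classical
  obtain ⟨g⟩ := Function.Embedding.nonempty_of_card_le hcard
  exact Matrix.linearIndependent_rows_of_linearIndependent_submatrix_cols (fun i s => x i ^ e s) g
    (linearIndependent_pow_exponents_of_card_le hx hpos (he.comp g.injective) le_rfl)

theorem stmt15_general (k l : ℕ)
    (T : Finset (Fin l))
    (I : Finset (Fin (k - l))) (hI : I.card ≤ T.card) :
    LinearIndependent ℝ
      (fun i : ↥I => fun t : ↥T => (((i : Fin (k - l)) : ℕ) + 1 : ℝ) ^ (((t : Fin l) : ℕ) + 1)) := by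
  refine linearIndependent_pow_nodes_of_card_le (fun i j h => ?_) (fun i => by positivity)
    (fun s t h => ?_) (by simpa using hI)
  · exact Subtype.ext (Fin.ext (by exact_mod_cast add_right_cancel h))
  · exact Subtype.ext (Fin.ext (add_right_cancel h))

/-- (General position of projected Vandermonde vectors.) For `k ≥ ℓ ≥ 1`,
let `α_i ∈ ℝ^ℓ` (for `1 ≤ i ≤ k-ℓ`) be given by `α_{i,j} = i^j`. For every nonempty
`T ⊆ [ℓ]`, any collection of at most `|T|` of the projections `π_T(α_i)` (with distinct
indices `i`) is linearly independent in `ℝ^{|T|}`. Here the index `i : ↥I` corresponds to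
the integer `i+1 ∈ {1,…,k-ℓ}` and the coordinate `t : ↥T` to the exponent `t+1 ∈ {1,…,ℓ}`. -/
theorem stmt15 (k l : ℕ) (hl : 1 ≤ l) (hk : l ≤ k)
    (T : Finset (Fin l)) (hT : T.Nonempty)
    (I : Finset (Fin (k - l))) (hI : I.card ≤ T.card) :
    LinearIndependent ℝ
      (fun i : ↥I => fun t : ↥T => (((i : Fin (k - l)) : ℕ) + 1 : ℝ) ^ (((t : Fin l) : ℕ) + 1)) :=
  stmt15_general k l T I hI
end

section
/- Let t ≥ 1 be an integer and let p be a nonzero real polynomial with at most t nonzero coefficients (i.e., at most t nonzero monomial terms). Then p has at most t − 1 distinct positive real roots. -/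
/-! Descartes' rule of signs bounds the number of positive roots, even counted with multiplicity,
by the number of sign changes in the coefficient sequence, and a sequence with `k` nonzero entries
has at most `k - 1` sign changes. -/

namespace Polynomial

variable {R : Type*} [Semiring R]

theorem length_filter_coeffList_ne_zero_le [DecidableEq R] (P : R[X]) :
    (P.coeffList.filter (· ≠ 0)).length ≤ P.support.card := by
  have hnodup : ((List.range P.degree.succ).reverse.filter (P.coeff · ≠ 0)).Nodup :=
    (List.nodup_reverse.2 List.nodup_range).filter _
  calc (P.coeffList.filter (· ≠ 0)).length
      = ((List.range P.degree.succ).reverse.filter (P.coeff · ≠ 0)).length := by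
        rw [coeffList, List.filter_map, List.length_map]; rfl
    _ = ((List.range P.degree.succ).reverse.filter (P.coeff · ≠ 0)).toFinset.card :=
        (List.toFinset_card_of_nodup hnodup).symm
    _ ≤ P.support.card := Finset.card_le_card fun i hi => by
        simpa using (List.mem_filter.1 (List.mem_toFinset.1 hi)).2

theorem signVariations_le_card_support_sub_one [LinearOrder R] (P : R[X]) :
    P.signVariations ≤ P.support.card - 1 := by
  have hsigns : (P.coeffList.map SignType.sign).filter (· ≠ 0) =
      (P.coeffList.filter (· ≠ 0)).map SignType.sign := by
    simp [List.filter_map, Function.comp_def]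
  have hdestutter := (List.destutter_sublist (· ≠ ·)
    ((P.coeffList.filter (· ≠ 0)).map SignType.sign)).length_le
  rw [List.length_map] at hdestutter
  have hnonzero := P.length_filter_coeffList_ne_zero_le
  unfold signVariations
  rw [hsigns]
  omega

theorem ncard_setOf_pos_eval_eq_zero_le_signVariations {R : Type*} [CommRing R] [LinearOrder R]
    [IsStrictOrderedRing R] {p : R[X]} (hp : p ≠ 0) :
    {x : R | 0 < x ∧ p.eval x = 0}.ncard ≤ p.signVariations := by
  have hset : {x : R | 0 < x ∧ p.eval x = 0} = ↑(p.roots.filter (0 < ·)).toFinset := by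
    ext x
    simp [mem_roots hp, and_comm]
  calc {x : R | 0 < x ∧ p.eval x = 0}.ncard
      = (p.roots.filter (0 < ·)).toFinset.card := by rw [hset, Set.ncard_coe_finset]
    _ ≤ p.roots.countP (0 < ·) := by
        rw [Multiset.countP_eq_card_filter]; exact Multiset.toFinset_card_le _
    _ ≤ p.signVariations := roots_countP_pos_le_signVariations p

end Polynomial

theorem stmt16_general (t : ℕ) (p : Polynomial ℝ) (hp : p ≠ 0)
    (hterms : p.support.card ≤ t) :
    {x : ℝ | 0 < x ∧ Polynomial.eval x p = 0}.ncard ≤ t - 1 :=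
  calc {x : ℝ | 0 < x ∧ Polynomial.eval x p = 0}.ncard
      ≤ p.signVariations := Polynomial.ncard_setOf_pos_eval_eq_zero_le_signVariations hp
    _ ≤ p.support.card - 1 := p.signVariations_le_card_support_sub_one
    _ ≤ t - 1 := Nat.sub_le_sub_right hterms 1

/-- A nonzero real polynomial with at most `t` nonzero terms has at most
`t - 1` distinct positive real roots. -/
theorem stmt16 (t : ℕ) (ht : 1 ≤ t) (p : Polynomial ℝ) (hp : p ≠ 0)
    (hterms : p.support.card ≤ t) :
    {x : ℝ | 0 < x ∧ Polynomial.eval x p = 0}.ncard ≤ t - 1 :=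
  stmt16_general t p hp hterms
end

section
/- Let k ≥ ℓ ≥ 0 be integers. For 1 ≤ i ≤ k − ℓ, let α_i ∈ ℝ^ℓ be given by α_{i,j} := i^j for 1 ≤ j ≤ ℓ, let e_i denote the i-th standard basis vector of ℝ^{k-ℓ}, and set v_i := α_i ⊕ e_i ∈ ℝ^k (the concatenation of α_i and e_i). Then X := span{v_1, …, v_{k-ℓ}} is a subspace of ℝ^k of dimension k − ℓ and every nonzero vector x ∈ X satisfies |supp(x)| ≥ ℓ + 1. -/
/-- The vectors `v_i = α_i ⊕ e_i ∈ ℝ^k ≃ ℝ^ℓ ⊕ ℝ^{k-ℓ}`, where `α_{i,j} = i^j`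
(for `1 ≤ i ≤ k-ℓ`, `1 ≤ j ≤ ℓ`) and `e_i` is the `i`-th standard basis vector of
`ℝ^{k-ℓ}`. The index `i : Fin (k-ℓ)` corresponds to the integer `i+1` and the coordinate
`j : Fin ℓ` to the exponent `j+1`. -/
noncomputable def vandVec (k l : ℕ) (i : Fin (k - l)) : (Fin l ⊕ Fin (k - l)) → ℝ :=
  Sum.elim (fun j => ((i : ℕ) + 1 : ℝ) ^ ((j : ℕ) + 1)) (fun j => if j = i then 1 else 0)

/-!
The coordinates of `x = ∑ cᵢ vᵢ` are the coefficients `cⱼ` followed by the values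
`∑ cᵢ (i+1)^(j+1)` of an exponential sum. By Descartes' rule of signs, a nonzero polynomial
has fewer positive roots than nonzero coefficients; dually, through the nonsingularity of
generalized Vandermonde matrices with positive nodes, an exponential sum with `s` nonzero
terms vanishes at fewer than `s` of the exponents `1, …, ℓ`. Hence `x` has at least
`s + (ℓ - (s - 1)) = ℓ + 1` nonzero coordinates.
-/

open Polynomial Finset

namespace Polynomial

theorem card_lt_card_support_of_forall_pos_isRoot {R : Type*} [CommRing R] [LinearOrder R]
    [IsStrictOrderedRing R] {P : R[X]} (hP : P ≠ 0) {T : Finset R}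
    (hT : ∀ t ∈ T, 0 < t ∧ P.IsRoot t) : #T < #P.support := by
  classical
  calc #T ≤ #(P.roots.filter (0 < ·)).toFinset :=
        card_le_card fun t ht => by simp [mem_roots hP, (hT t ht).1, (hT t ht).2.eq_zero]
    _ ≤ P.roots.countP (0 < ·) := by
        rw [Multiset.countP_eq_card_filter]; exact Multiset.toFinset_card_le _
    _ ≤ signVariations P := P.roots_countP_pos_le_signVariations
    _ < #P.support := signVariations_lt_card_support hP

end Polynomial

namespace Matrix

def generalizedVandermonde {R ι : Type*} [Monoid R] (x : ι → R) (e : ι → ℕ) : Matrix ι ι R :=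
  of fun j i => x i ^ e j

variable {R ι : Type*} [CommRing R] [LinearOrder R] [IsStrictOrderedRing R] [Fintype ι]
  [DecidableEq ι]

/-- A vanishing combination of the rows is a polynomial with one nonzero coefficient per row
but with every node as a positive root, which Descartes' rule of signs forbids. -/
theorem det_generalizedVandermonde_ne_zero {x : ι → R} (hx : Function.Injective x)
    (hpos : ∀ i, 0 < x i) {e : ι → ℕ} (he : Function.Injective e) :
    (generalizedVandermonde x e).det ≠ 0 := by
  intro hdet
  obtain ⟨g, hg, hgM⟩ := exists_vecMul_eq_zero_iff.2 hdet
  set P : R[X] := ∑ j, monomial (e j) (g j)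
  have hcoeff (j : ι) : P.coeff (e j) = g j := by simp [P, coeff_monomial, he.eq_iff]
  have hP : P ≠ 0 := fun h => hg (funext fun j => by simpa [h] using (hcoeff j).symm)
  have hsupport : P.support ⊆ univ.image e := by
    intro n hn
    contrapose! hn
    simp_all [P, coeff_monomial]
  have hroots : ∀ t ∈ univ.image x, 0 < t ∧ P.IsRoot t := by
    intro t ht
    obtain ⟨i, -, rfl⟩ := mem_image.1 ht
    refine ⟨hpos i, ?_⟩
    simpa [P, eval_finsetSum, vecMul, dotProduct, generalizedVandermonde, mul_comm]
      using congrFun hgM i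
  have := (card_lt_card_support_of_forall_pos_isRoot hP hroots).trans_le
    ((card_le_card hsupport).trans card_image_le)
  rw [card_image_of_injective _ hx] at this
  exact this.false

end Matrix

open Matrix in
/-- Taking as many vanishing exponents as there are nonzero terms would give a vector in the
kernel of a nonsingular generalized Vandermonde matrix. -/
theorem card_filter_sum_mul_pow_eq_zero_lt {R ι κ : Type*} [CommRing R] [LinearOrder R]
    [IsStrictOrderedRing R] [Fintype ι] [Fintype κ] {x : ι → R} (hx : Function.Injective x)
    (hpos : ∀ i, 0 < x i) {e : κ → ℕ} (he : Function.Injective e) {c : ι → R} (hc : c ≠ 0) :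
    #{j | ∑ i, c i * x i ^ e j = 0} < #{i | c i ≠ 0} := by
  classical
  set S : Finset ι := {i | c i ≠ 0}
  by_contra! hle
  obtain ⟨T, hTZ, hTS⟩ := exists_subset_card_eq hle
  let σ : S ≃ T := Fintype.equivOfCardEq (by simp [hTS])
  have hkernel : generalizedVandermonde (fun i : S => x i) (fun s => e (σ s)) *ᵥ
      (fun i : S => c i) = 0 := by
    funext s
    have := (mem_filter.1 (hTZ (σ s).2)).2
    rw [← sum_filter_of_ne fun i _ => left_ne_zero_of_mul, ← sum_coe_sort] at this
    simpa [mulVec, dotProduct, generalizedVandermonde, mul_comm] using this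
  obtain ⟨i, hi⟩ := Function.ne_iff.1 hc
  have hnonzero : (fun i : S => c i) ≠ 0 :=
    Function.ne_iff.2 ⟨⟨i, by simpa [S] using hi⟩, hi⟩
  exact det_generalizedVandermonde_ne_zero (hx.comp Subtype.val_injective) (fun i => hpos i.1)
    ((he.comp Subtype.val_injective).comp σ.injective)
    (exists_mulVec_eq_zero_iff.1 ⟨_, hnonzero, hkernel⟩)

theorem Set.ncard_setOf_sum {α β : Type*} [Fintype α] [Fintype β] (p : α ⊕ β → Prop)
    [DecidablePred p] : {j | p j}.ncard = #{i | p (.inl i)} + #{i | p (.inr i)} := by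
  simp only [Set.ncard_eq_toFinset_card', Set.toFinset_ofPred, card_filter, Fintype.sum_sum_type]

theorem linearIndependent_vandVec (k l : ℕ) : LinearIndependent ℝ (vandVec k l) := by
  apply LinearIndependent.of_comp (LinearMap.funLeft ℝ ℝ Sum.inr)
  convert (Pi.basisFun ℝ (Fin (k - l))).linearIndependent using 1
  ext i j
  simp [vandVec, LinearMap.funLeft, Pi.single_apply]

theorem sum_smul_vandVec_inl {k l : ℕ} (c : Fin (k - l) → ℝ) (j : Fin l) :
    (∑ i, c i • vandVec k l i) (Sum.inl j) = ∑ i, c i * ((i : ℕ) + 1 : ℝ) ^ ((j : ℕ) + 1) := by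
  simp [vandVec, Finset.sum_apply]

theorem sum_smul_vandVec_inr {k l : ℕ} (c : Fin (k - l) → ℝ) (j : Fin (k - l)) :
    (∑ i, c i • vandVec k l i) (Sum.inr j) = c j := by
  simp [vandVec, Finset.sum_apply]

theorem stmt17_general (k l : ℕ) :
    Module.finrank ℝ ↥(Submodule.span ℝ (Set.range (vandVec k l))) = k - l ∧
      ∀ x ∈ Submodule.span ℝ (Set.range (vandVec k l)), x ≠ 0 →
        l + 1 ≤ {j : Fin l ⊕ Fin (k - l) | x j ≠ 0}.ncard := by
  classical
  refine ⟨by rw [finrank_span_eq_card (linearIndependent_vandVec k l), Fintype.card_fin], ?_⟩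
  intro x hx hx0
  obtain ⟨c, rfl⟩ := (Submodule.mem_span_range_iff_exists_fun ℝ).1 hx
  have hc : c ≠ 0 := by rintro rfl; simp at hx0
  have hzeros := card_filter_sum_mul_pow_eq_zero_lt (x := fun i : Fin (k - l) => (i : ℝ) + 1)
    (fun a b hab => Fin.ext (by simpa using hab)) (fun i => by positivity)
    (e := fun j : Fin l => (j : ℕ) + 1) (fun a b hab => Fin.ext (by simpa using hab)) hc
  have hsplit := card_filter_add_card_filter_not (s := univ)
    (fun j : Fin l => ∑ i, c i * ((i : ℕ) + 1 : ℝ) ^ ((j : ℕ) + 1) = 0)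
  rw [card_univ, Fintype.card_fin] at hsplit
  rw [Set.ncard_setOf_sum]
  simp only [sum_smul_vandVec_inl, sum_smul_vandVec_inr, ne_eq] at hzeros ⊢
  omega

/-- The span `X` of the vectors `v_1, …, v_{k-ℓ}` has dimension `k - ℓ`
and every nonzero `x ∈ X` has support of size at least `ℓ + 1`. -/
theorem stmt17 (k l : ℕ) (h : l ≤ k) :
    Module.finrank ℝ ↥(Submodule.span ℝ (Set.range (vandVec k l))) = k - l ∧
      ∀ x ∈ Submodule.span ℝ (Set.range (vandVec k l)), x ≠ 0 →
        l + 1 ≤ {j : Fin l ⊕ Fin (k - l) | x j ≠ 0}.ncard :=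
  stmt17_general k l
end
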